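/- arXiv:2604.24151 — 10 statements merged into one kernel-verified Lean document; each statement's English description precedes it below -/
import Mathlib

section
/- In an idempotent commutative semiring generated by a finite set of variables, subject to axioms s^{b(s)} = 0 for each bounded variable s (with b(s) ≥ 2), every product of n linear terms (each a nonempty sum of distinct bounded variables) with n > Σ_s (b(s)−1) is equal to 0. -/
/-!
Expanding the product of `n` linear terms yields a sum of monomials `∏ i, v (x i)` with
`x : Fin n → B`. Since `n > Σ_s (b s - 1)`, by pigeonhole some variable `s` occurs at least
`b s` times in such a monomial, which therefore contains the factor `v s ^ b s = 0`.
-/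

open Finset

section

variable {ι B : Type*} [Fintype ι] [Fintype B]

theorem Fintype.exists_le_card_fiber_of_sum_pred_lt [DecidableEq B] (b : B → ℕ) (x : ι → B)
    (h : ∑ s, (b s - 1) < Fintype.card ι) : ∃ s, b s ≤ #{i | x i = s} := by
  by_contra! hsmall
  have hcard : Fintype.card ι = ∑ s, #{i | x i = s} :=
    card_eq_sum_card_fiberwise fun i _ => mem_univ (x i)
  have : ∑ s, #{i | x i = s} ≤ ∑ s, (b s - 1) :=
    sum_le_sum fun s _ => Nat.le_sub_one_of_lt (hsmall s)
  omega

theorem prod_comp_eq_zero_of_sum_pred_lt {M : Type*} [CommMonoidWithZero M] (b : B → ℕ)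
    (v : B → M) (hv : ∀ s, v s ^ b s = 0) (x : ι → B)
    (h : ∑ s, (b s - 1) < Fintype.card ι) : ∏ i, v (x i) = 0 := by
  classical
  obtain ⟨s, hs⟩ := Fintype.exists_le_card_fiber_of_sum_pred_lt b x h
  rw [← prod_fiberwise' univ x v]
  refine prod_eq_zero (mem_univ s) ?_
  rw [prod_const]
  exact pow_eq_zero_of_le hs (hv s)

theorem prod_sum_eq_zero_of_sum_pred_lt {R : Type*} [CommSemiring R] (b : B → ℕ)
    (v : B → R) (hv : ∀ s, v s ^ b s = 0) (W : ι → Finset B)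
    (h : ∑ s, (b s - 1) < Fintype.card ι) : ∏ i, ∑ s ∈ W i, v s = 0 := by
  classical
  rw [prod_univ_sum]
  exact sum_eq_zero fun x _ => prod_comp_eq_zero_of_sum_pred_lt b v hv x h

end

theorem linear_product_bounded_only_zero_general
    {B : Type*} [Fintype B] (b : B → ℕ)
    {R : Type*} [CommSemiring R]
    (v : B → R) (hv : ∀ s, v s ^ b s = 0)
    (l : List (Finset B))
    (hlen : ∑ s : B, (b s - 1) < l.length) :
    (l.map (fun W => ∑ s ∈ W, v s)).prod = 0 := by
  rw [← Fin.prod_univ_fun_getElem]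
  exact prod_sum_eq_zero_of_sum_pred_lt b v hv (fun i : Fin l.length => l[i.1])
    (by simpa using hlen)

/-- In an idempotent commutative semiring with axioms `s ^ b s = 0`
for each bounded variable `s` (with `b s ≥ 2`), every product of `n` linear terms
(each a nonempty sum of distinct bounded variables) with
`n > Σ_s (b s − 1)` equals `0`. -/
theorem linear_product_bounded_only_zero
    {B : Type*} [Fintype B] (b : B → ℕ) (hb : ∀ s, 2 ≤ b s)
    {R : Type*} [CommSemiring R] (hadd : ∀ a : R, a + a = a)
    (v : B → R) (hv : ∀ s, v s ^ b s = 0)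
    (l : List (Finset B)) (hne : ∀ W ∈ l, W.Nonempty)
    (hlen : ∑ s : B, (b s - 1) < l.length) :
    (l.map (fun W => ∑ s ∈ W, v s)).prod = 0 :=
  linear_product_bounded_only_zero_general b v hv l hlen
end

section
/- Let t be a product of linear terms over 2-threshold variables (each variable x satisfies x² = x) in an idempotent commutative semiring. Then the set of maximal monomials of the normal form of t (maximal with respect to divisibility/inclusion of supports) coincides exactly with the set of monomials of t's normal form having maximal degree. -/
/-- A monomial of the product `ℓ₁⋯ℓ_k` of linear terms over 2-threshold variables:
a finite set `m ⊆ X` admitting an injective choice function `f` with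
`y ∈ ℓ (f y)` for each `y ∈ m`. -/
def IsMonomial {X : Type*} {k : ℕ} (ℓ : Fin k → Finset X) (m : Finset X) : Prop :=
  ∃ f : X → Fin k, Set.InjOn f m ∧ ∀ y ∈ m, y ∈ ℓ (f y)

/-!
The monomials of `ℓ₁⋯ℓ_k` are the partial transversals of the family `(ℓ_i)`, and these are the
independent sets of a matroid: a monomial with fewer variables than another one can be enlarged by
a variable of the other one. So an inclusion-maximal monomial cannot be beaten in degree.

Augmentation is proved by induction on the set of factors the variables may be matched to: taking
a factor `ℓ_i` away from a matching leaves it intact except for at most one variable, the one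
matched to `ℓ_i`.
-/

open Finset

section Matching

variable {X ι : Type*}

def MatchableInto (ℓ : ι → Finset X) (s : Finset ι) (m : Finset X) : Prop :=
  ∃ f : X → ι, Set.InjOn f m ∧ ∀ y ∈ m, f y ∈ s ∧ y ∈ ℓ (f y)

def HasAugmentation [DecidableEq X] (ℓ : ι → Finset X) (s : Finset ι) : Prop :=
  ∀ m m', MatchableInto ℓ s m → MatchableInto ℓ s m' → #m < #m' →
    ∃ y ∈ m', y ∉ m ∧ MatchableInto ℓ s (insert y m)

variable {ℓ : ι → Finset X} {s : Finset ι} {m n : Finset X}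

namespace MatchableInto

theorem subset (hm : MatchableInto ℓ s m) (hnm : n ⊆ m) : MatchableInto ℓ s n := by
  obtain ⟨f, hinj, hf⟩ := hm
  exact ⟨f, hinj.mono (coe_subset.2 hnm), fun y hy => hf y (hnm hy)⟩

theorem mono (hm : MatchableInto ℓ s m) {t : Finset ι} (hst : s ⊆ t) :
    MatchableInto ℓ t m := by
  obtain ⟨f, hinj, hf⟩ := hm
  exact ⟨f, hinj, fun y hy => ⟨hst (hf y hy).1, (hf y hy).2⟩⟩

theorem eq_empty_of_empty (hm : MatchableInto ℓ ∅ m) : m = ∅ := by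
  obtain ⟨f, -, hf⟩ := hm
  exact eq_empty_of_forall_notMem fun y hy => notMem_empty _ (hf y hy).1

theorem insert_insert [DecidableEq X] [DecidableEq ι] {i : ι} {a : X}
    (hm : MatchableInto ℓ s m) (hi : i ∉ s) (ha : a ∈ ℓ i) (ham : a ∉ m) :
    MatchableInto ℓ (insert i s) (insert a m) := by
  obtain ⟨f, hinj, hf⟩ := hm
  have hfm : Set.EqOn f (Function.update f a i) m := fun y hy =>
    (Function.update_of_ne (ne_of_mem_of_not_mem hy ham) _ _).symm
  refine ⟨Function.update f a i, ?_, ?_⟩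
  · rw [coe_insert, Set.injOn_insert (mod_cast ham), ← hfm.image_eq, Function.update_self]
    exact ⟨hinj.congr hfm, fun ⟨y, hy, hfy⟩ => hi (hfy ▸ (hf y hy).1)⟩
  · intro y hy
    rcases mem_insert.1 hy with rfl | hy
    · simpa using ha
    · rw [← hfm hy]
      exact ⟨mem_insert_of_mem (hf y hy).1, (hf y hy).2⟩

theorem of_insert [DecidableEq X] [DecidableEq ι] {i : ι}
    (hm : MatchableInto ℓ (insert i s) m) :
    MatchableInto ℓ s m ∨ ∃ a ∈ m, a ∈ ℓ i ∧ MatchableInto ℓ s (m.erase a) := by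
  obtain ⟨f, hinj, hf⟩ := hm
  by_cases hi : ∃ a ∈ m, f a = i
  · obtain ⟨a, ham, rfl⟩ := hi
    refine Or.inr ⟨a, ham, (hf a ham).2, f, hinj.mono (by simp), fun y hy => ?_⟩
    obtain ⟨hya, hym⟩ := mem_erase.1 hy
    have hfy : f y ≠ f a := fun h => hya (hinj hym ham h)
    exact ⟨(mem_insert.1 (hf y hym).1).resolve_left hfy, (hf y hym).2⟩
  · push Not at hi
    exact Or.inl ⟨f, hinj, fun y hy =>
      ⟨(mem_insert.1 (hf y hy).1).resolve_left (hi y hy), (hf y hy).2⟩⟩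

theorem exists_subset_card_le_succ [DecidableEq X] [DecidableEq ι] {i : ι}
    (hm : MatchableInto ℓ (insert i s) m) :
    ∃ n ⊆ m, MatchableInto ℓ s n ∧ #m ≤ #n + 1 := by
  rcases hm.of_insert with hm | ⟨a, ham, -, ha⟩
  · exact ⟨m, subset_refl m, hm, by omega⟩
  · exact ⟨m.erase a, erase_subset a m, ha, (card_erase_add_one ham).ge⟩

end MatchableInto

theorem hasAugmentation_empty [DecidableEq X] : HasAugmentation ℓ ∅ := by
  intro m m' _ hm' hlt
  simp [hm'.eq_empty_of_empty] at hlt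

theorem HasAugmentation.exists_insert_of_card_lt [DecidableEq X] [DecidableEq ι] {i : ι}
    {m m' : Finset X} (haug : HasAugmentation ℓ s) (hi : i ∉ s) (hm : MatchableInto ℓ s m)
    (hm' : MatchableInto ℓ (insert i s) m') (hlt : #m < #m') :
    ∃ y ∈ m', y ∉ m ∧ MatchableInto ℓ (insert i s) (insert y m) := by
  rcases hm'.of_insert with hm' | ⟨b, hbm', hbi, hb⟩
  · obtain ⟨y, hym', hym, hins⟩ := haug m m' hm hm' hlt
    exact ⟨y, hym', hym, hins.mono (subset_insert i s)⟩
  by_cases hbm : b ∈ m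
  · have hlt' : #(m.erase b) < #(m'.erase b) := by
      have := card_erase_add_one hbm
      have := card_erase_add_one hbm'
      omega
    obtain ⟨y, hym', hym, hins⟩ := haug _ _ (hm.subset (erase_subset b m)) hb hlt'
    obtain ⟨hyb, hym'⟩ := mem_erase.1 hym'
    have hym : y ∉ m := fun hy => hym (mem_erase.2 ⟨hyb, hy⟩)
    refine ⟨y, hym', hym, ?_⟩
    rw [← insert_erase hbm, insert_comm]
    exact hins.insert_insert hi hbi (by simp [hyb.symm])
  · exact ⟨b, hbm', hbm, hm.insert_insert hi hbi hbm⟩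

theorem hasAugmentation_insert [DecidableEq X] [DecidableEq ι] {i : ι}
    (haug : HasAugmentation ℓ s) (hi : i ∉ s) : HasAugmentation ℓ (insert i s) := by
  intro m m' hm hm' hlt
  rcases hm.of_insert with hm | ⟨a, ham, hai, ha⟩
  · exact haug.exists_insert_of_card_lt hi hm hm' hlt
  obtain ⟨n', hn'm', hn', hcard⟩ := hm'.exists_subset_card_le_succ
  have hlt' : #(m.erase a) < #n' := by
    have := card_erase_add_one ham
    omega
  obtain ⟨y, hyn', hym, hins⟩ := haug _ _ ha hn' hlt'
  by_cases hya : y = a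
  -- then `m` itself is matchable into `s`, and `ℓ i` is free for a variable of `m'`
  · rw [hya, insert_erase ham] at hins
    exact haug.exists_insert_of_card_lt hi hins hm' hlt
  have hym : y ∉ m := fun hy => hym (mem_erase.2 ⟨hya, hy⟩)
  refine ⟨y, hn'm' hyn', hym, ?_⟩
  rw [← insert_erase ham, insert_comm]
  exact hins.insert_insert hi hai (by simp [Ne.symm hya])

theorem hasAugmentation [DecidableEq X] [DecidableEq ι] (ℓ : ι → Finset X) (s : Finset ι) :
    HasAugmentation ℓ s := by
  induction s using Finset.induction_on with
  | empty => exact hasAugmentation_empty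
  | insert i s hi haug => exact hasAugmentation_insert haug hi

theorem isMonomial_iff_matchableInto_univ {k : ℕ} (ℓ : Fin k → Finset X) (m : Finset X) :
    IsMonomial ℓ m ↔ MatchableInto ℓ univ m := by
  simp [IsMonomial, MatchableInto]

theorem IsMonomial.exists_insert_of_card_lt [DecidableEq X] {k : ℕ} {ℓ : Fin k → Finset X}
    {m m' : Finset X} (hm : IsMonomial ℓ m) (hm' : IsMonomial ℓ m') (hlt : #m < #m') :
    ∃ y ∈ m', y ∉ m ∧ IsMonomial ℓ (insert y m) := by
  simp only [isMonomial_iff_matchableInto_univ] at *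
  exact hasAugmentation ℓ univ m m' hm hm' hlt

end Matching

theorem maximal_iff_max_degree_two_threshold_general
    {X : Type*} {k : ℕ} (ℓ : Fin k → Finset X)
    (m : Finset X) (hm : IsMonomial ℓ m) :
    (∀ m', IsMonomial ℓ m' → m ⊆ m' → m = m') ↔
      (∀ m', IsMonomial ℓ m' → m'.card ≤ m.card) := by
  classical
  refine ⟨fun hmax m' hm' => ?_, fun hdeg m' hm' hmm' => eq_of_subset_of_card_le hmm' (hdeg m' hm')⟩
  by_contra! hlt
  obtain ⟨y, -, hym, hins⟩ := hm.exists_insert_of_card_lt hm' hlt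
  exact hym (hmax _ hins (subset_insert y m) ▸ mem_insert_self y m)

/-- for a product of linear terms over 2-threshold variables, a
monomial of the normal form is maximal (w.r.t. inclusion) iff it has maximal
degree; hence the set of maximal monomials coincides with the set of monomials
of maximal degree. -/
theorem maximal_iff_max_degree_two_threshold
    {X : Type*} [DecidableEq X] {k : ℕ} (ℓ : Fin k → Finset X)
    (m : Finset X) (hm : IsMonomial ℓ m) :
    (∀ m', IsMonomial ℓ m' → m ⊆ m' → m = m') ↔
      (∀ m', IsMonomial ℓ m' → m'.card ≤ m.card) :=
  maximal_iff_max_degree_two_threshold_general ℓ m hm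
end

section
/- Let t be a product of linear terms over threshold variables, where each variable x has threshold θ(x) ≥ 2 and satisfies x^{θ(x)} = x^{θ(x)−1}. If ℓ is another linear term such that the maximal degree of monomials in the normal form of t·ℓ equals that of t, then the set of maximal monomials of nf(t·ℓ) equals the set of maximal monomials of nf(t). -/
/-- Normal form of a product of linear terms `ℓ₁⋯ℓ_k` over threshold variables
(`x^{θ x} = x^{θ x − 1}`): the set of reduced monomials obtained by choosing one
variable in each factor and capping each multiplicity at `θ x − 1`. -/
def NfSet {X : Type*} [DecidableEq X] (θ : X → ℕ) {k : ℕ} (ℓ : Fin k → Finset X) :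
    Set (X →₀ ℕ) :=
  {m | ∃ g : Fin k → X, (∀ i, g i ∈ ℓ i) ∧
    ∀ x, m x = min (Finset.univ.filter (fun i => g i = x)).card (θ x - 1)}

/-- Maximal monomials of a set of reduced monomials, w.r.t. the componentwise
multiplicity order. -/
def MaxMon {X : Type*} (S : Set (X →₀ ℕ)) : Set (X →₀ ℕ) :=
  {m | m ∈ S ∧ ∀ m' ∈ S, m ≤ m' → m = m'}

/-- Maximal degree among monomials of `S`. -/
noncomputable def maxDeg {X : Type*} (S : Set (X →₀ ℕ)) : ℕ :=
  sSup {n | ∃ m ∈ S, (m.sum fun _ e => e) = n}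

/-!
A monomial of `NfSet θ ℓ` is the capped tally of a choice `g` of one variable per factor. The
heart of the matter is that every maximal monomial has maximal degree. If `g` realises a maximal
monomial, every variable reachable from an overflowing one (tally `≥ θ x`) by reassigning factors
is saturated, since shifting one unit of multiplicity along such a path would enlarge the
monomial; the set of reachable variables then bounds, by counting factors, the degree of every
other choice. Granting this, appending `L` without raising the maximal degree can only add a
variable to a maximal monomial where it is already saturated.
-/

open Finset

namespace NfSet

section Tally

variable {X : Type*}

noncomputable def tally {k : ℕ} (g : Fin k → X) : X →₀ ℕ := ∑ i, Finsupp.single (g i) 1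

noncomputable def cap (θ : X → ℕ) (c : X →₀ ℕ) : X →₀ ℕ :=
  Finsupp.onFinset c.support (fun x => min (c x) (θ x - 1)) fun _ hx =>
    Finsupp.mem_support_iff.mpr fun h0 => hx (by simp [h0])

variable (θ : X → ℕ)

@[simp]
lemma cap_apply (c : X →₀ ℕ) (x : X) : cap θ c x = min (c x) (θ x - 1) := rfl

lemma tally_snoc {k : ℕ} (g : Fin k → X) (y : X) :
    tally (Fin.snoc g y : Fin (k + 1) → X) = tally g + Finsupp.single y 1 := by
  simp [tally, Fin.sum_univ_castSucc]

lemma cap_le_self (c : X →₀ ℕ) : cap θ c ≤ c := fun _ => min_le_left _ _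

lemma cap_mono {c c' : X →₀ ℕ} (h : c ≤ c') : cap θ c ≤ cap θ c' := fun x =>
  min_le_min_right _ (h x)

lemma cap_add_le_cap_add {c c' : X →₀ ℕ} (h : cap θ c ≤ cap θ c') (d : X →₀ ℕ) :
    cap θ (c + d) ≤ cap θ (c' + d) := fun x => by
  have := h x
  simp only [cap_apply, Finsupp.add_apply] at this ⊢
  omega

lemma cap_lt_cap_of_add_single_eq {c c' : X →₀ ℕ} {x y : X}
    (h : c' + Finsupp.single x 1 = c + Finsupp.single y 1)
    (hx : θ x - 1 < c x) (hy : c y < θ y - 1) : cap θ c < cap θ c' := by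
  classical
  have hc : ∀ w, c' w + (if x = w then 1 else 0) = c w + (if y = w then 1 else 0) := fun w => by
    simpa [Finsupp.single_apply] using DFunLike.congr_fun h w
  refine lt_of_le_of_ne (fun w => ?_) fun e => ?_
  · have := hc w
    simp only [cap_apply]
    split_ifs at this <;> subst_vars <;> omega
  · have := hc y
    have := DFunLike.congr_fun e y
    simp only [cap_apply] at *
    split_ifs at * <;> subst_vars <;> omega

lemma degree_filter_tally (p : X → Prop) [DecidablePred p] {k : ℕ} (g : Fin k → X) :
    ((tally g).filter p).degree = #{i | p (g i)} := by
  rw [tally, Finsupp.filter_sum, map_sum, Finset.card_filter]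
  refine sum_congr rfl fun i _ => ?_
  split_ifs with h
  · rw [Finsupp.filter_single_of_pos _ h, Finsupp.degree_single]
  · rw [Finsupp.filter_single_of_neg _ h, map_zero]

/-- On `R` the monomial of `g` is capped everywhere; off `R` it counts every factor that `g` does
not send into `R`, and `h` sends at least as many factors into `R` as `g` does. -/
lemma degree_cap_tally_le (R : X → Prop) [DecidablePred R] {k : ℕ} {g h : Fin k → X}
    (hsat : ∀ x, R x → θ x - 1 ≤ tally g x) (hunsat : ∀ x, ¬R x → tally g x ≤ θ x - 1)
    (hmap : ∀ i, R (g i) → R (h i)) :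
    (cap θ (tally h)).degree ≤ (cap θ (tally g)).degree := by
  have hsplit (f : X →₀ ℕ) : f.degree = (f.filter R).degree + (f.filter (¬R ·)).degree := by
    rw [← map_add, Finsupp.filter_add_filter_not]
  have hR : (cap θ (tally h)).filter R ≤ (cap θ (tally g)).filter R := fun x => by
    simp only [Finsupp.filter_apply, cap_apply]
    split_ifs with hx
    · have := hsat x hx
      omega
    · rfl
  have hnotR : (cap θ (tally g)).filter (¬R ·) = (tally g).filter (¬R ·) := by
    ext x
    have := hunsat x
    simp only [Finsupp.filter_apply, cap_apply]
    split_ifs with hx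
    exacts [rfl, min_eq_left (this hx)]
  have hcard : #{i | ¬R (h i)} ≤ #{i | ¬R (g i)} :=
    card_le_card fun i => by
      simpa only [mem_filter, mem_univ, true_and] using mt (hmap i)
  calc (cap θ (tally h)).degree
      ≤ ((cap θ (tally g)).filter R).degree + ((tally h).filter (¬R ·)).degree := by
        rw [hsplit]
        refine add_le_add (Finsupp.degree_mono hR) (Finsupp.degree_mono fun x => ?_)
        simp only [Finsupp.filter_apply]
        split_ifs
        exacts [le_rfl, cap_le_self θ _ x]
    _ ≤ (cap θ (tally g)).degree := by
        rw [hsplit (cap θ (tally g)), hnotR, degree_filter_tally, degree_filter_tally]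
        gcongr

end Tally

section Paths

variable {X : Type*} {k : ℕ} (ℓ : Fin k → Finset X)

/-- `IsPath ℓ g x l y`: a walk from `x` through the vertices of `l` ending at `y`, where a step
`u → v` means that some factor `i` with `g i = u` contains `v`, so reassigning `i` to `v` moves
one unit of multiplicity from `u` to `v`. -/
def IsPath (g : Fin k → X) : X → List X → X → Prop
  | x, [], y => x = y
  | x, z :: l, y => (∃ i, g i = x ∧ z ∈ ℓ i) ∧ IsPath g z l y

variable {ℓ}

lemma IsPath.exists_suffix_of_mem {g : Fin k → X} :
    ∀ {l : List X} {z y x : X}, IsPath ℓ g z l y → x ∈ z :: l →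
      ∃ l' : List X, l'.length ≤ l.length ∧ IsPath ℓ g x l' y
  | [], _, _, _, hp, hx => ⟨[], le_rfl, (List.mem_singleton.mp hx).trans hp⟩
  | w :: l, _, _, _, hp, hx => by
    obtain rfl | hx := List.mem_cons.mp hx
    · exact ⟨w :: l, le_rfl, hp⟩
    · obtain ⟨l', hlen, hp'⟩ := IsPath.exists_suffix_of_mem hp.2 hx
      exact ⟨l', hlen.trans (Nat.le_succ _), hp'⟩

lemma IsPath.update {g : Fin k → X} {i : Fin k} {w : X} :
    ∀ {l : List X} {z y : X}, IsPath ℓ g z l y → g i ∉ z :: l →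
      IsPath ℓ (Function.update g i w) z l y
  | [], _, _, hp, _ => hp
  | _ :: _, _, _, ⟨⟨j, hgj, hv⟩, htail⟩, hi => by
    have hji : j ≠ i := by
      rintro rfl
      exact hi (hgj ▸ List.mem_cons_self ..)
    exact ⟨⟨j, by rw [Function.update_of_ne hji, hgj], hv⟩,
      htail.update fun h => hi (List.mem_cons_of_mem _ h)⟩

lemma IsPath.concat {g : Fin k → X} {i : Fin k} {y : X} (hy : y ∈ ℓ i) :
    ∀ {l : List X} {x : X}, IsPath ℓ g x l (g i) → IsPath ℓ g x (l ++ [y]) y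
  | [], _, hp => ⟨⟨i, hp.symm, hy⟩, rfl⟩
  | _ :: _, _, ⟨he, hp⟩ => ⟨he, hp.concat hy⟩

lemma tally_update_add_single (g : Fin k → X) (i : Fin k) (z : X) :
    tally (Function.update g i z) + Finsupp.single (g i) 1 = tally g + Finsupp.single z 1 := by
  have hrest : ∑ j ∈ univ.erase i, Finsupp.single (Function.update g i z j) 1 =
      ∑ j ∈ univ.erase i, Finsupp.single (g j) 1 :=
    sum_congr rfl fun j hj => by rw [Function.update_of_ne (ne_of_mem_erase hj)]
  rw [tally, tally, ← add_sum_erase _ _ (mem_univ i), ← add_sum_erase _ _ (mem_univ i), hrest,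
    Function.update_self]
  abel

theorem exists_tally_add_single_eq_of_isPath {g : Fin k → X} (hg : ∀ i, g i ∈ ℓ i)
    {x y : X} {l : List X} (hp : IsPath ℓ g x l y) :
    ∃ g' : Fin k → X, (∀ i, g' i ∈ ℓ i) ∧
      tally g' + Finsupp.single x 1 = tally g + Finsupp.single y 1 := by
  match l, hp with
  | [], hp => exact ⟨g, hg, by rw [show x = y from hp]⟩
  | z :: l, ⟨⟨i, hgi, hz⟩, htail⟩ =>
    -- a walk returning to `x` is shortcut; otherwise reassigning the first factor to `z`
    -- leaves the rest of the walk intact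
    by_cases hx : x ∈ z :: l
    · obtain ⟨l', hlen, hp'⟩ := htail.exists_suffix_of_mem hx
      exact exists_tally_add_single_eq_of_isPath hg hp'
    · have hg₁ : ∀ j, Function.update g i z j ∈ ℓ j := fun j => by
        rcases eq_or_ne j i with rfl | hj
        · rwa [Function.update_self]
        · rw [Function.update_of_ne hj]
          exact hg j
      obtain ⟨g', hg', hex⟩ :=
        exists_tally_add_single_eq_of_isPath hg₁ (htail.update (hgi ▸ hx))
      refine ⟨g', hg', add_right_cancel (b := Finsupp.single z 1) ?_⟩
      calc tally g' + Finsupp.single x 1 + Finsupp.single z 1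
          = (tally g' + Finsupp.single z 1) + Finsupp.single x 1 := by abel
        _ = (tally (Function.update g i z) + Finsupp.single (g i) 1) + Finsupp.single y 1 := by
          rw [hex, hgi]; abel
        _ = tally g + Finsupp.single y 1 + Finsupp.single z 1 := by
          rw [tally_update_add_single]; abel
termination_by l.length

end Paths

section MaximalMonomials

variable {X : Type*} {S : Set (X →₀ ℕ)} {m : X →₀ ℕ}

lemma degree_le_maxDeg (hS : S.Finite) (hm : m ∈ S) : m.degree ≤ maxDeg S :=
  le_csSup (hS.image _).bddAbove ⟨m, hm, rfl⟩

lemma maxDeg_le {n : ℕ} (hS : S.Nonempty) (h : ∀ m ∈ S, m.degree ≤ n) : maxDeg S ≤ n :=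
  csSup_le (hS.image _) (Set.forall_mem_image.mpr h)

lemma eq_of_le_of_degree_le {m' : X →₀ ℕ} (hle : m ≤ m') (hdeg : m'.degree ≤ m.degree) :
    m = m' := by
  obtain ⟨d, rfl⟩ := le_iff_exists_add.mp hle
  rw [map_add] at hdeg
  rw [(Finsupp.degree_eq_zero_iff d).mp (by omega), add_zero]

lemma mem_maxMon_iff_maximal : m ∈ MaxMon S ↔ Maximal (· ∈ S) m :=
  and_congr_right fun _ => forall₂_congr fun _ _ =>
    ⟨fun h hle => (h hle).ge, fun h hle => le_antisymm hle (h hle)⟩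

lemma exists_le_mem_maxMon (hS : S.Finite) (hm : m ∈ S) : ∃ m' ∈ MaxMon S, m ≤ m' := by
  obtain ⟨m', hle, hmax⟩ := hS.exists_le_maximal hm
  exact ⟨m', mem_maxMon_iff_maximal.mpr hmax, hle⟩

lemma mem_maxMon_of_maxDeg_le (hS : S.Finite) (hm : m ∈ S) (hdeg : maxDeg S ≤ m.degree) :
    m ∈ MaxMon S :=
  ⟨hm, fun _ hm' hle => eq_of_le_of_degree_le hle ((degree_le_maxDeg hS hm').trans hdeg)⟩

end MaximalMonomials

section NormalForm

variable {X : Type*} [DecidableEq X] (θ : X → ℕ) {k : ℕ}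

lemma tally_apply (g : Fin k → X) (x : X) : tally g x = #{i | g i = x} := by
  rw [tally, Finsupp.finsetSum_apply, Finset.card_filter]
  exact sum_congr rfl fun i _ => Finsupp.single_apply

lemma mem_nfSet_iff {ℓ : Fin k → Finset X} {m : X →₀ ℕ} :
    m ∈ NfSet θ ℓ ↔ ∃ g : Fin k → X, (∀ i, g i ∈ ℓ i) ∧ cap θ (tally g) = m := by
  simp only [Finsupp.ext_iff, cap_apply, tally_apply]
  exact exists_congr fun g => and_congr_right fun _ => forall_congr' fun x => eq_comm

lemma mem_nfSet_snoc_iff {ℓ : Fin k → Finset X} {L : Finset X} {m : X →₀ ℕ} :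
    m ∈ NfSet θ (Fin.snoc ℓ L) ↔
      ∃ g : Fin k → X, (∀ i, g i ∈ ℓ i) ∧ ∃ y ∈ L, cap θ (tally g + Finsupp.single y 1) = m := by
  rw [mem_nfSet_iff]
  constructor
  · rintro ⟨G, hG, rfl⟩
    refine ⟨Fin.init G, fun i => by simpa [Fin.init] using hG i.castSucc, G (Fin.last k),
      by simpa using hG (Fin.last k), ?_⟩
    rw [← tally_snoc, Fin.snoc_init_self]
  · rintro ⟨g, hg, y, hy, rfl⟩
    refine ⟨Fin.snoc g y, Fin.forall_fin_succ'.mpr ⟨fun i => ?_, ?_⟩, by rw [tally_snoc]⟩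
    · simpa using hg i
    · simpa using hy

lemma nfSet_finite (ℓ : Fin k → Finset X) : (NfSet θ ℓ).Finite :=
  (Set.finite_range fun g : ∀ i, ℓ i => cap θ (tally fun i => (g i : X))).subset fun _ hm => by
    obtain ⟨g, hg, rfl⟩ := (mem_nfSet_iff θ).mp hm
    exact ⟨fun i => ⟨g i, hg i⟩, rfl⟩

theorem degree_eq_maxDeg_of_mem_maxMon {ℓ : Fin k → Finset X} {m : X →₀ ℕ}
    (hm : m ∈ MaxMon (NfSet θ ℓ)) : m.degree = maxDeg (NfSet θ ℓ) := by
  classical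
  obtain ⟨g, hg, rfl⟩ := (mem_nfSet_iff θ).mp hm.1
  set R : X → Prop := fun y => ∃ x l, θ x - 1 < tally g x ∧ IsPath ℓ g x l y
  have hsat : ∀ y, R y → θ y - 1 ≤ tally g y := by
    rintro y ⟨x, l, hx, hp⟩
    by_contra! hy
    obtain ⟨g', hg', hex⟩ := exists_tally_add_single_eq_of_isPath hg hp
    have hlt := cap_lt_cap_of_add_single_eq θ hex hx hy
    exact hlt.ne (hm.2 _ ((mem_nfSet_iff θ).mpr ⟨g', hg', rfl⟩) hlt.le)
  have hunsat : ∀ x, ¬R x → tally g x ≤ θ x - 1 := fun x hx =>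
    not_lt.mp fun hover => hx ⟨x, [], hover, rfl⟩
  refine le_antisymm (degree_le_maxDeg (nfSet_finite θ ℓ) hm.1) (maxDeg_le ⟨_, hm.1⟩ ?_)
  intro m' hm'
  obtain ⟨h, hh, rfl⟩ := (mem_nfSet_iff θ).mp hm'
  exact degree_cap_tally_le θ R hsat hunsat fun i ⟨x, l, hx, hp⟩ => ⟨x, _, hx, hp.concat (hh i)⟩

end NormalForm

end NfSet

open NfSet

theorem maxMon_stable_of_maxDeg_stable_general
    {X : Type*} [DecidableEq X] (θ : X → ℕ)
    {k : ℕ} (ℓ : Fin k → Finset X)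
    (L : Finset X) (hL : L.Nonempty)
    (hdeg : maxDeg (NfSet θ (Fin.snoc ℓ L)) = maxDeg (NfSet θ ℓ)) :
    MaxMon (NfSet θ (Fin.snoc ℓ L)) = MaxMon (NfSet θ ℓ) := by
  have hfin := nfSet_finite θ ℓ
  have hfin' := nfSet_finite θ (Fin.snoc ℓ L)
  ext m
  constructor
  · intro hm
    obtain ⟨g, hg, y, hy, rfl⟩ := (mem_nfSet_snoc_iff θ).mp hm.1
    obtain ⟨m₁, hm₁, hle⟩ := exists_le_mem_maxMon hfin ((mem_nfSet_iff θ).mpr ⟨g, hg, rfl⟩)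
    obtain ⟨g₁, hg₁, rfl⟩ := (mem_nfSet_iff θ).mp hm₁.1
    -- appending `y` to a maximal monomial of `NfSet θ ℓ` above `m` lands on `m` itself
    have hm₂ : cap θ (tally g₁ + Finsupp.single y 1) ∈ NfSet θ (Fin.snoc ℓ L) :=
      (mem_nfSet_snoc_iff θ).mpr ⟨g₁, hg₁, y, hy, rfl⟩
    have heq := hm.2 _ hm₂ (cap_add_le_cap_add θ hle _)
    have hdeg₁ : (cap θ (tally g + Finsupp.single y 1)).degree ≤ (cap θ (tally g₁)).degree := by
      rw [degree_eq_maxDeg_of_mem_maxMon θ hm₁, ← hdeg]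
      exact degree_le_maxDeg hfin' hm.1
    rwa [← eq_of_le_of_degree_le (heq ▸ cap_mono θ le_self_add) hdeg₁]
  · intro hm
    obtain ⟨g, hg, rfl⟩ := (mem_nfSet_iff θ).mp hm.1
    obtain ⟨y, hy⟩ := hL
    have hm' : cap θ (tally g + Finsupp.single y 1) ∈ NfSet θ (Fin.snoc ℓ L) :=
      (mem_nfSet_snoc_iff θ).mpr ⟨g, hg, y, hy, rfl⟩
    have hdm := degree_eq_maxDeg_of_mem_maxMon θ hm
    have heq : cap θ (tally g) = cap θ (tally g + Finsupp.single y 1) :=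
      eq_of_le_of_degree_le (cap_mono θ le_self_add) (hdm ▸ hdeg ▸ degree_le_maxDeg hfin' hm')
    exact mem_maxMon_of_maxDeg_le hfin' (heq ▸ hm') (hdeg.trans_le hdm.ge)

/-- if appending the linear factor `L` to the product `t = ℓ₁⋯ℓ_k`
of linear terms over threshold variables does not change the maximal degree of
the normal form, then it does not change the set of maximal monomials. -/
theorem maxMon_stable_of_maxDeg_stable
    {X : Type*} [DecidableEq X] (θ : X → ℕ) (hθ : ∀ x, 2 ≤ θ x)
    {k : ℕ} (ℓ : Fin k → Finset X) (hℓ : ∀ i, (ℓ i).Nonempty)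
    (L : Finset X) (hL : L.Nonempty)
    (hdeg : maxDeg (NfSet θ (Fin.snoc ℓ L)) = maxDeg (NfSet θ ℓ)) :
    MaxMon (NfSet θ (Fin.snoc ℓ L)) = MaxMon (NfSet θ ℓ) :=
  maxMon_stable_of_maxDeg_stable_general θ ℓ L hL hdeg
end

section
/- In an idempotent commutative semiring over threshold variables with axioms x^{θ(x)} = x^{θ(x)−1} (θ(x) ≥ 2), every product t of linear terms of length exceeding Σ_x (θ(x)−1) has a strict subproduct t' such that for every intermediate subproduct t'' with t' ⪯ t'' ⪯ t, the maximal monomials of nf(t'') coincide with those of nf(t). -/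
/-- Normal form of a product of linear terms, given as a list `l` of factors
(each a nonempty sum of threshold variables, `x^{θ x} = x^{θ x − 1}`): the set
of reduced monomials obtained by choosing one variable from each factor and
capping multiplicities at `θ x − 1`. -/
def NfSetL {X : Type*} [DecidableEq X] (θ : X → ℕ) (l : List (Finset X)) :
    Set (X →₀ ℕ) :=
  {m | ∃ c : List X, List.Forall₂ (· ∈ ·) c l ∧ ∀ x, m x = min (c.count x) (θ x - 1)}

/-!
Choosing one variable from each factor is a bipartite matching problem, so by Hall's theorem
a capped monomial `m` lies below a monomial of the product iff `∑_{y ∈ S} m y` is at most the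
number of factors meeting `S`, for every set `S` of variables. Call `S` tight for a transversal
when the capped counts attain this bound. Sets admitting a tight transversal are closed under
union, so there is a largest one, `B`; it is met by at most `∑ (θ x - 1) < length` factors, so
some factor `V` misses `B`. Every set meeting `V` is then slack for every transversal, so Hall's
condition survives deleting `V`: the normal forms with and without `V` have the same lower
closure, hence the same maximal monomials, and so does every subproduct in between.
-/

open Finset

section Transversal

variable {ι X : Type*} [Fintype ι] [DecidableEq X]

def coverCount (W : ι → Finset X) (S : Finset X) : ℕ := #{i | (W i ∩ S).Nonempty}

-- The equality case of `sum_min_le_coverCount`.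
def IsTight (W : ι → Finset X) (k : X → ℕ) (f : ι → X) (S : Finset X) : Prop :=
  (∀ i, (W i ∩ S).Nonempty → f i ∈ S) ∧ ∀ y ∈ S, #{i | f i = y} ≤ k y

def HasTightTransversal (W : ι → Finset X) (k : X → ℕ) (S : Finset X) : Prop :=
  ∃ f : ι → X, (∀ i, f i ∈ W i) ∧ IsTight W k f S

variable {W : ι → Finset X} {k : X → ℕ} {f g : ι → X} {S T : Finset X}

lemma sum_card_fiber_eq_card_preimage (f : ι → X) (S : Finset X) :
    ∑ y ∈ S, #{i | f i = y} = #{i | f i ∈ S} := by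
  rw [card_eq_sum_card_fiberwise (s := {i | f i ∈ S}) (t := S) fun i hi => (mem_filter.1 hi).2]
  refine sum_congr rfl fun y hy => ?_
  rw [filter_filter]
  congr 1
  ext i
  simp only [mem_filter, mem_univ, true_and, iff_and_self]
  rintro rfl
  exact hy

lemma sum_min_le_card_preimage (f : ι → X) (k : X → ℕ) (S : Finset X) :
    ∑ y ∈ S, min #{i | f i = y} (k y) ≤ #{i | f i ∈ S} :=
  (sum_le_sum fun _ _ => min_le_left _ _).trans_eq (sum_card_fiber_eq_card_preimage f S)

lemma preimage_subset_cover (hf : ∀ i, f i ∈ W i) (S : Finset X) :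
    ({i | f i ∈ S} : Finset ι) ⊆ ({i | (W i ∩ S).Nonempty} : Finset ι) :=
  monotone_filter_right _ fun i _ hi => ⟨f i, mem_inter.2 ⟨hf i, hi⟩⟩

lemma sum_min_le_coverCount (hf : ∀ i, f i ∈ W i) (k : X → ℕ) (S : Finset X) :
    ∑ y ∈ S, min #{i | f i = y} (k y) ≤ coverCount W S :=
  (sum_min_le_card_preimage f k S).trans (card_le_card (preimage_subset_cover hf S))

lemma sum_min_lt_coverCount_of_not_isTight (hf : ∀ i, f i ∈ W i) (h : ¬ IsTight W k f S) :
    ∑ y ∈ S, min #{i | f i = y} (k y) < coverCount W S := by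
  simp only [IsTight, not_and_or, not_forall, not_le, exists_prop] at h
  rcases h with ⟨i, hiS, hfi⟩ | ⟨y, hy, hky⟩
  · exact (sum_min_le_card_preimage f k S).trans_lt (card_lt_card ⟨preimage_subset_cover hf S,
      fun h => hfi (mem_filter.1 (h (mem_filter.2 ⟨mem_univ i, hiS⟩))).2⟩)
  · calc ∑ y ∈ S, min #{i | f i = y} (k y)
        < ∑ y ∈ S, #{i | f i = y} :=
          sum_lt_sum (fun _ _ => min_le_left _ _) ⟨y, hy, min_lt_iff.2 (Or.inr hky)⟩
      _ = #{i | f i ∈ S} := sum_card_fiber_eq_card_preimage f S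
      _ ≤ coverCount W S := card_le_card (preimage_subset_cover hf S)

lemma IsTight.coverCount_le (h : IsTight W k f S) : coverCount W S ≤ ∑ y ∈ S, k y :=
  calc coverCount W S ≤ #{i | f i ∈ S} :=
        card_le_card <| monotone_filter_right _ fun i _ => h.1 i
    _ = ∑ y ∈ S, #{i | f i = y} := (sum_card_fiber_eq_card_preimage f S).symm
    _ ≤ ∑ y ∈ S, k y := sum_le_sum h.2

lemma IsTight.union (hf : ∀ i, f i ∈ W i) (hS : IsTight W k f S) (hT : IsTight W k g T) :
    IsTight W k (fun i => if (W i ∩ T).Nonempty then g i else f i) (S ∪ T) := by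
  refine ⟨fun i hi => ?_, fun y hy => ?_⟩
  · dsimp only
    split_ifs with hiT
    · exact mem_union_right _ (hT.1 i hiT)
    · rw [inter_union_distrib_left, union_nonempty] at hi
      exact mem_union_left _ (hS.1 i (hi.resolve_right hiT))
  · by_cases hyT : y ∈ T
    · refine le_trans (card_le_card fun i hi => ?_) (hT.2 y hyT)
      simp only [mem_filter, mem_univ, true_and] at hi ⊢
      split_ifs at hi with hiT
      · exact hi
      · exact absurd ⟨y, mem_inter.2 ⟨hi ▸ hf i, hyT⟩⟩ hiT
    · have hyS : y ∈ S := (mem_union.1 hy).resolve_right hyT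
      refine le_trans (card_le_card fun i hi => ?_) (hS.2 y hyS)
      simp only [mem_filter, mem_univ, true_and] at hi ⊢
      split_ifs at hi with hiT
      · exact absurd (hi ▸ hT.1 i hiT) hyT
      · exact hi

lemma supClosed_hasTightTransversal : SupClosed {S | HasTightTransversal W k S} := by
  rintro S ⟨f, hf, hS⟩ T ⟨g, hg, hT⟩
  exact ⟨_, fun i => by split_ifs; exacts [hg i, hf i], hS.union hf hT⟩

lemma exists_slack_factor [Fintype X] (hW : ∀ i, (W i).Nonempty)
    (hcard : ∑ x, k x < Fintype.card ι) :
    ∃ j, ∀ f : ι → X, (∀ i, f i ∈ W i) → ∀ S, (W j ∩ S).Nonempty →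
      ∑ y ∈ S, min #{i | f i = y} (k y) < coverCount W S := by
  classical
  set B := (univ.filter (HasTightTransversal W k)).sup id
  have hB : HasTightTransversal W k B :=
    supClosed_hasTightTransversal.finsetSup_mem ⟨∅, by
      simpa using ⟨fun i => (hW i).choose, fun i => (hW i).choose_spec, by simp [IsTight]⟩⟩
      fun S hS => (mem_filter.1 hS).2
  have hle : ∀ S, HasTightTransversal W k S → S ⊆ B := fun S hS =>
    le_sup (f := id) (mem_filter.2 ⟨mem_univ S, hS⟩)
  obtain ⟨j, hj⟩ : ∃ j, ¬ (W j ∩ B).Nonempty := by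
    by_contra! h
    obtain ⟨f, -, hfB⟩ := hB
    have hcover : coverCount W B = Fintype.card ι := by
      rw [coverCount, filter_true_of_mem fun i _ => h i, card_univ]
    have := hfB.coverCount_le
    have := sum_le_sum_of_subset (f := k) (subset_univ B)
    omega
  refine ⟨j, fun f hf S hS => sum_min_lt_coverCount_of_not_isTight hf fun hfS => hj ?_⟩
  obtain ⟨y, hy⟩ := hS
  rw [mem_inter] at hy
  exact ⟨y, mem_inter.2 ⟨hy.1, hle S ⟨f, hf, hfS⟩ hy.2⟩⟩

-- Hall's theorem, applied to `d y` copies of each variable `y`.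
lemma exists_transversal_of_sum_le_coverCount (hW : ∀ i, (W i).Nonempty)
    (d : X → ℕ) (hd : ∀ S, ∑ y ∈ S, d y ≤ coverCount W S) :
    ∃ f : ι → X, (∀ i, f i ∈ W i) ∧ ∀ y, d y ≤ #{i | f i = y} := by
  classical
  let t : (Σ y, Fin (d y)) → Finset ι := fun p => {i | p.1 ∈ W i}
  obtain ⟨φ, hφ, hφt⟩ := (all_card_le_biUnion_card_iff_exists_injective t).1 fun s =>
    calc #s ≤ #((s.image Sigma.fst).sigma fun y => (univ : Finset (Fin (d y)))) :=
          card_le_card fun p hp => mem_sigma.2 ⟨mem_image_of_mem _ hp, mem_univ _⟩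
      _ = ∑ y ∈ s.image Sigma.fst, d y := by simp [card_sigma]
      _ ≤ coverCount W (s.image Sigma.fst) := hd _
      _ ≤ #(s.biUnion t) := card_le_card fun i hi => by
          obtain ⟨y, hy⟩ := (mem_filter.1 hi).2
          obtain ⟨p, hp, rfl⟩ := mem_image.1 (mem_inter.1 hy).2
          exact mem_biUnion.2 ⟨p, hp, mem_filter.2 ⟨mem_univ i, (mem_inter.1 hy).1⟩⟩
  let f : ι → X := fun i => if h : ∃ p, φ p = i then h.choose.1 else (hW i).choose
  have hfφ : ∀ p, f (φ p) = p.1 := fun p => by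
    have h : ∃ q, φ q = φ p := ⟨p, rfl⟩
    simp only [f, dif_pos h, hφ h.choose_spec]
  refine ⟨f, fun i => ?_, fun y => ?_⟩
  · by_cases h : ∃ p, φ p = i
    · obtain ⟨p, rfl⟩ := h
      rw [hfφ]
      exact (mem_filter.1 (hφt p)).2
    · simpa only [f, dif_neg h] using (hW i).choose_spec
  · calc d y = #(univ : Finset (Fin (d y))) := by simp
      _ ≤ #{i | f i = y} :=
        card_le_card_of_injOn (fun n => φ ⟨y, n⟩)
          (fun n _ => mem_filter.2 ⟨mem_univ _, hfφ _⟩)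
          (fun a _ b _ h => by simpa using hφ h)

end Transversal

lemma maxMon_eq_of_lowerClosure_eq {X : Type*} {S T : Set (X →₀ ℕ)}
    (h : lowerClosure S = lowerClosure T) : MaxMon S = MaxMon T := by
  suffices key : ∀ S T : Set (X →₀ ℕ), lowerClosure S = lowerClosure T →
      MaxMon S ⊆ MaxMon T from
    (key S T h).antisymm (key T S h.symm)
  intro S T h m ⟨hmS, hmax⟩
  have dominated {A B : Set (X →₀ ℕ)} (h : lowerClosure A = lowerClosure B) {a : X →₀ ℕ}
      (ha : a ∈ A) : ∃ b ∈ B, a ≤ b :=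
    mem_lowerClosure.1 (h ▸ subset_lowerClosure ha)
  obtain ⟨b, hbT, hmb⟩ := dominated h hmS
  obtain ⟨c, hcS, hbc⟩ := dominated h.symm hbT
  obtain rfl : m = b := le_antisymm hmb (hmax c hcS (hmb.trans hbc) ▸ hbc)
  refine ⟨hbT, fun b' hb' hmb' => ?_⟩
  obtain ⟨c', hc'S, hbc'⟩ := dominated h.symm hb'
  exact le_antisymm hmb' (hmax c' hc'S (hmb'.trans hbc') ▸ hbc')

namespace List

variable {α β : Type*}

lemma countP_eq_card_filter_getElem (l : List α) (p : α → Prop) [DecidablePred p] :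
    l.countP (fun a => decide (p a)) = #{i : Fin l.length | p l[i]} := by
  conv_lhs => rw [← ofFn_getElem (xs := l)]
  rw [← Multiset.coe_countP, ← Fin.univ_val_map, Multiset.countP_map]
  rfl

lemma count_ofFn_eq_card [DecidableEq α] {n : ℕ} (f : Fin n → α) (a : α) :
    (ofFn f).count a = #{i | f i = a} := by
  rw [← Multiset.coe_count, ← Fin.univ_val_map, Multiset.count_map, card_def, filter_val]
  simp only [eq_comm]

lemma forall₂_iff_exists_ofFn {R : α → β → Prop} {c : List α} {l : List β} :
    Forall₂ R c l ↔ ∃ f : Fin l.length → α, (∀ i, R (f i) l[i]) ∧ c = ofFn f := by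
  constructor
  · intro h
    induction h with
    | nil => exact ⟨Fin.elim0, fun i => i.elim0, rfl⟩
    | @cons a b c l hab _ ih =>
      obtain ⟨f, hf, rfl⟩ := ih
      exact ⟨Fin.cons a f, Fin.cases hab hf, (ofFn_succ (f := Fin.cons a f)).symm⟩
  · rintro ⟨f, hf, rfl⟩
    exact forall₂_iff_get.2 ⟨by simp, fun i _ h => by simpa using hf ⟨i, h⟩⟩

lemma Sublist.exists_forall₂_sublist {R : α → β → Prop} {l₁ l₂ : List β}
    (h : l₁.Sublist l₂) (hR : ∀ b ∈ l₂, ∃ a, R a b) {c₁ : List α}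
    (hc₁ : Forall₂ R c₁ l₁) :
    ∃ c₂, Forall₂ R c₂ l₂ ∧ c₁.Sublist c₂ := by
  induction h generalizing c₁ with
  | slnil => exact ⟨c₁, hc₁, Sublist.refl _⟩
  | cons b _ ih =>
    obtain ⟨c₂, hc₂, hsub⟩ := ih (fun b' hb' => hR b' (mem_cons_of_mem _ hb')) hc₁
    obtain ⟨a, hab⟩ := hR b mem_cons_self
    exact ⟨a :: c₂, .cons hab hc₂, hsub.cons a⟩
  | cons_cons b _ ih =>
    obtain ⟨a, c, hab, hc, rfl⟩ := forall₂_cons_right_iff.1 hc₁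
    obtain ⟨c₂, hc₂, hsub⟩ := ih (fun b' hb' => hR b' (mem_cons_of_mem _ hb')) hc
    exact ⟨a :: c₂, .cons hab hc₂, hsub.cons_cons a⟩

lemma eq_or_eq_of_sublist_of_length_succ {l₁ l₂ l₃ : List α} (h₁ : l₁.Sublist l₂)
    (h₂ : l₂.Sublist l₃) (hlen : l₃.length = l₁.length + 1) :
    l₂ = l₁ ∨ l₂ = l₃ := by
  have := h₁.length_le
  have := h₂.length_le
  rcases Nat.lt_or_ge l₁.length l₂.length with h | h
  · exact .inr (h₂.eq_of_length (by omega))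
  · exact .inl (h₁.eq_of_length (by omega)).symm

end List

section Lists

variable {X : Type*} [DecidableEq X]

lemma coverCount_getElem (l : List (Finset X)) (S : Finset X) :
    coverCount (fun i : Fin l.length => l[i]) S = l.countP fun W => (W ∩ S).Nonempty :=
  (List.countP_eq_card_filter_getElem l fun W => (W ∩ S).Nonempty).symm

lemma mem_nfSetL_iff {θ : X → ℕ} {l : List (Finset X)} {m : X →₀ ℕ} :
    m ∈ NfSetL θ l ↔
      ∃ f : Fin l.length → X, (∀ i, f i ∈ l[i]) ∧
        ∀ x, m x = min #{i | f i = x} (θ x - 1) := by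
  simp only [NfSetL, Set.mem_ofPred_eq, List.forall₂_iff_exists_ofFn]
  constructor
  · rintro ⟨_, ⟨f, hf, rfl⟩, hm⟩
    exact ⟨f, hf, by simpa only [List.count_ofFn_eq_card] using hm⟩
  · rintro ⟨f, hf, hm⟩
    exact ⟨_, ⟨f, hf, rfl⟩, by simpa only [List.count_ofFn_eq_card] using hm⟩

variable [Fintype X]

lemma exists_mem_slack (k : X → ℕ) {l : List (Finset X)} (hne : ∀ W ∈ l, W.Nonempty)
    (hlen : ∑ x, k x < l.length) :
    ∃ V ∈ l, ∀ f : Fin l.length → X, (∀ i, f i ∈ l[i]) → ∀ S, (V ∩ S).Nonempty →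
      ∑ y ∈ S, min #{i | f i = y} (k y) < l.countP fun W => (W ∩ S).Nonempty := by
  obtain ⟨j, hj⟩ := exists_slack_factor (W := fun i : Fin l.length => l[i]) (k := k)
    (fun i => hne _ (List.getElem_mem _)) (by simpa using hlen)
  exact ⟨l[j], List.getElem_mem _, fun f hf S hS => coverCount_getElem l S ▸ hj f hf S hS⟩

lemma NfSetL.exists_le_of_sublist (θ : X → ℕ) {l₁ l₂ : List (Finset X)}
    (h : l₁.Sublist l₂) (hne : ∀ W ∈ l₂, W.Nonempty) {m : X →₀ ℕ}
    (hm : m ∈ NfSetL θ l₁) :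
    ∃ m' ∈ NfSetL θ l₂, m ≤ m' := by
  obtain ⟨c₁, hc₁, hm⟩ := hm
  obtain ⟨c₂, hc₂, hsub⟩ := h.exists_forall₂_sublist hne hc₁
  refine ⟨Finsupp.equivFunOnFinite.symm fun x => min (c₂.count x) (θ x - 1),
    ⟨c₂, hc₂, fun _ => rfl⟩, fun x => ?_⟩
  rw [hm x]
  exact min_le_min_right _ (hsub.count_le x)

lemma NfSetL.exists_le_erase_of_slack (θ : X → ℕ) {s t : List (Finset X)} {V : Finset X}
    (hne : ∀ W ∈ s ++ t, W.Nonempty)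
    (hslack : ∀ f : Fin (s ++ V :: t).length → X, (∀ i, f i ∈ (s ++ V :: t)[i]) →
      ∀ S, (V ∩ S).Nonempty → ∑ y ∈ S, min #{i | f i = y} (θ y - 1) <
        (s ++ V :: t).countP fun W => (W ∩ S).Nonempty)
    {m : X →₀ ℕ} (hm : m ∈ NfSetL θ (s ++ V :: t)) :
    ∃ m' ∈ NfSetL θ (s ++ t), m ≤ m' := by
  obtain ⟨f, hf, hm⟩ := mem_nfSetL_iff.1 hm
  have hall (S : Finset X) : ∑ y ∈ S, min #{i | f i = y} (θ y - 1) ≤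
      coverCount (fun i : Fin (s ++ t).length => (s ++ t)[i]) S := by
    have hstrict := hslack f hf S
    have hbound := sum_min_le_coverCount hf (θ · - 1) S
    rw [coverCount_getElem] at hbound ⊢
    rw [List.perm_middle.countP_eq, List.countP_cons] at hstrict hbound
    by_cases hVS : (V ∩ S).Nonempty
    · have := hstrict hVS
      simp only [hVS, decide_true, if_true] at this
      omega
    · simpa [hVS] using hbound
  obtain ⟨g, hg, hfg⟩ := exists_transversal_of_sum_le_coverCount
    (fun i => hne _ (List.getElem_mem _)) _ hall
  refine ⟨Finsupp.equivFunOnFinite.symm fun x => min #{i | g i = x} (θ x - 1),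
    mem_nfSetL_iff.2 ⟨g, hg, fun _ => rfl⟩, fun x => ?_⟩
  rw [hm x]
  exact le_min (hfg x) (min_le_right _ _)

lemma exists_lowerClosure_nfSetL_erase_eq (θ : X → ℕ) {l : List (Finset X)}
    (hne : ∀ W ∈ l, W.Nonempty) (hlen : ∑ x, (θ x - 1) < l.length) :
    ∃ s V t, l = s ++ V :: t ∧
      lowerClosure (NfSetL θ (s ++ t)) = lowerClosure (NfSetL θ l) := by
  obtain ⟨V, hV, hslack⟩ := exists_mem_slack (θ · - 1) hne hlen
  obtain ⟨s, t, rfl⟩ := List.append_of_mem hV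
  have hsub : (s ++ t).Sublist (s ++ V :: t) := (List.sublist_cons_self V t).append_left s
  refine ⟨s, V, t, rfl, le_antisymm ?_ ?_⟩
  · exact lowerClosure_le.2 fun m hm =>
      mem_lowerClosure.2 (NfSetL.exists_le_of_sublist θ hsub hne hm)
  · exact lowerClosure_le.2 fun m hm => mem_lowerClosure.2 <|
      NfSetL.exists_le_erase_of_slack θ (fun W hW => hne W (hsub.subset hW)) hslack hm

end Lists

theorem threshold_cutoff_general
    {X : Type*} [Fintype X] [DecidableEq X] (θ : X → ℕ)
    (l : List (Finset X)) (hne : ∀ W ∈ l, W.Nonempty)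
    (hlen : ∑ x : X, (θ x - 1) < l.length) :
    ∃ l' : List (Finset X), l'.Sublist l ∧ l' ≠ l ∧
      ∀ l'' : List (Finset X), l'.Sublist l'' → l''.Sublist l →
        MaxMon (NfSetL θ l'') = MaxMon (NfSetL θ l) := by
  obtain ⟨s, V, t, rfl, hclosure⟩ := exists_lowerClosure_nfSetL_erase_eq θ hne hlen
  have hsub : (s ++ t).Sublist (s ++ V :: t) := (List.sublist_cons_self V t).append_left s
  refine ⟨s ++ t, hsub, fun h => by simpa using congrArg List.length h, fun l'' h₁ h₂ => ?_⟩
  rcases List.eq_or_eq_of_sublist_of_length_succ h₁ h₂ (by simp; omega) with rfl | rfl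
  · exact maxMon_eq_of_lowerClosure_eq hclosure
  · rfl

/-- every product of linear terms over threshold variables of
length exceeding `Σ_x (θ x − 1)` has a strict subproduct `t'` such that all
intermediate subproducts `t'' ` with `t' ⪯ t'' ⪯ t` have the same set of
maximal monomials as `t`. -/
theorem threshold_cutoff
    {X : Type*} [Fintype X] [DecidableEq X] (θ : X → ℕ) (hθ : ∀ x, 2 ≤ θ x)
    (l : List (Finset X)) (hne : ∀ W ∈ l, W.Nonempty)
    (hlen : ∑ x : X, (θ x - 1) < l.length) :
    ∃ l' : List (Finset X), l'.Sublist l ∧ l' ≠ l ∧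
      ∀ l'' : List (Finset X), l'.Sublist l'' → l''.Sublist l →
        MaxMon (NfSetL θ l'') = MaxMon (NfSetL θ l) :=
  threshold_cutoff_general θ l hne hlen
end

section
/- In an idempotent commutative semiring over variables partitioned into bounded variables (satisfying s^{b(s)} = 0) and periodic variables (satisfying s^{p(s)} = 1), every product t of linear terms each containing the constant 1 as a summand, of length exceeding Σ_{bounded s}(b(s)−1) + Σ_{periodic s}(p(s)−1), has a strict subproduct t' such that nf(t'') = nf(t) for every t'' with t' ⪯ t'' ⪯ t. -/
/-!
In an idempotent semiring `(1 + x)^k = 1 + x + ⋯ + x^k`, so a variable with `x^b = 0` or `x^p = 1`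
satisfies `(1 + x)^(c + 1) = (1 + x)^c` for its capacity `c = b - 1`, resp. `c = p - 1`. Hence
`G = ∏_{u ∈ U} (1 + u)^(c u)` is idempotent and dominates every factor `1 + Σ_{s ∈ W} s` with
`W ⊆ U`. If factors supported in `U` fill the slots `(u, k)`, `k < c u`, injectively, each
containing the variable `u` of its slot, their product lies between `G` and a power of `G`; so it
absorbs `G`, and with it every other factor supported in `U`.
With more factors than total capacity such a configuration avoiding one factor exists: either
Hall's condition for the slots holds and any factor can be dropped, or a deficient set of variables
can be discarded together with the factors meeting it, and one recurses.
-/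

open Finset Function

theorem pow_eq_pow_of_pow_succ_eq {M : Type*} [Monoid M] {a : M} {k m : ℕ}
    (h : a ^ (k + 1) = a ^ k) (hkm : k ≤ m) : a ^ m = a ^ k := by
  induction m, hkm using Nat.le_induction with
  | base => rfl
  | succ m _ ih => rw [pow_succ, ih, ← pow_succ, h]

theorem isIdempotentElem_pow_of_pow_succ_eq {M : Type*} [Monoid M] {a : M} {k : ℕ}
    (h : a ^ (k + 1) = a ^ k) : IsIdempotentElem (a ^ k) := by
  rw [IsIdempotentElem, ← pow_add]
  exact pow_eq_pow_of_pow_succ_eq h (Nat.le_add_right k k)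

theorem IsIdempotentElem.mul_eq_right_of_le_of_le_pow {M : Type*} [CommMonoid M] [PartialOrder M]
    [MulLeftMono M] {g q : M} {n : ℕ} (hg : IsIdempotentElem g) (h1 : 1 ≤ g) (hgq : g ≤ q)
    (hqg : q ≤ g ^ n) : g * q = q := by
  refine le_antisymm ?_ (le_mul_of_one_le_left' h1)
  calc g * q ≤ g * g ^ n := mul_le_mul_right hqg g
    _ = g := by rw [← pow_succ', hg.pow_succ_eq]
    _ ≤ q := hgq

theorem List.prod_map_eraseIdx_eq_prod_erase {α M : Type*} [CommMonoid M] (l : List α)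
    (f : α → M) (i : Fin l.length) :
    ((l.eraseIdx i).map f).prod = ∏ j ∈ univ.erase i, f l[j] := by
  classical
  have hl : (univ.val.map fun j : Fin l.length => l[j]) = l := by
    rw [Fin.univ_val_map]
    exact congrArg _ List.ofFn_getElem
  have herase : ((univ.erase i).val.map fun j => l[j]) = (l.eraseIdx i : Multiset α) := by
    rw [erase_val, Multiset.map_erase_of_mem _ _ (mem_univ i), hl, Multiset.coe_erase]
    exact Multiset.coe_eq_coe.mpr (List.erase_getElem i.isLt)
  rw [prod_eq_multiset_prod, ← Function.comp_def f, ← Multiset.map_map, herase, Multiset.map_coe,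
    Multiset.prod_coe]

theorem List.eq_eraseIdx_or_eq_of_sublist {α : Type*} {l l'' : List α} {i : ℕ} (hi : i < l.length)
    (h₁ : (l.eraseIdx i).Sublist l'') (h₂ : l''.Sublist l) : l'' = l.eraseIdx i ∨ l'' = l := by
  have hlen := List.length_eraseIdx_of_lt hi
  rcases h₂.length_le.eq_or_lt with heq | hlt
  · exact Or.inr (h₂.eq_of_length heq)
  · exact Or.inl (h₁.eq_of_length (by have := h₁.length_le; omega)).symm

section

variable {σ ι : Type*}

def oneLinear {S : Type*} [CommSemiring S] (v : σ → S) (W : Finset σ) : S := 1 + ∑ x ∈ W, v x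

/-- The pairs `(u, k)`, `k < c u`, are the `c u` slots of `u`. -/
def Saturates (W : ι → Finset σ) (c : σ → ℕ) (A : Finset ι) (U : Finset σ) : Prop :=
  ∃ e : (U.sigma fun u => range (c u)) → ι, Injective e ∧
    ∀ x, e x ∈ A ∧ x.1.1 ∈ W (e x) ∧ W (e x) ⊆ U

theorem Saturates.mono {W : ι → Finset σ} {c : σ → ℕ} {A A' : Finset ι} {U : Finset σ}
    (hA : Saturates W c A U) (hAA' : A ⊆ A') : Saturates W c A' U :=
  let ⟨e, he, hprop⟩ := hA
  ⟨e, he, fun x => ⟨hAA' (hprop x).1, (hprop x).2⟩⟩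

theorem exists_demand_matching [DecidableEq ι] [DecidableEq σ] (W : ι → Finset σ) (c : σ → ℕ)
    (V : Finset σ) (A : Finset ι) (hall : ∀ S ⊆ V, ∑ u ∈ S, c u ≤ #{j ∈ A | ¬Disjoint (W j) S}) :
    ∃ e : (V.sigma fun u => range (c u)) → ι, Injective e ∧ ∀ x, e x ∈ A ∧ x.1.1 ∈ W (e x) := by
  let t : (V.sigma fun u => range (c u)) → Finset ι := fun x => {j ∈ A | x.1.1 ∈ W j}
  suffices ∀ s, #s ≤ #(s.biUnion t) by
    obtain ⟨e, he, het⟩ := (all_card_le_biUnion_card_iff_exists_injective t).mp this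
    exact ⟨e, he, fun x => mem_filter.mp (het x)⟩
  intro s
  set S := s.image fun x => x.1.1
  have hSV : S ⊆ V := by
    intro u hu
    obtain ⟨x, -, rfl⟩ := mem_image.mp hu
    exact (mem_sigma.mp x.2).1
  have hs : #s ≤ ∑ u ∈ S, c u := by
    calc #s = #(s.map (Embedding.subtype _)) := (card_map _).symm
      _ ≤ #(S.sigma fun u => range (c u)) := card_le_card fun x hx => by
          obtain ⟨y, hy, rfl⟩ := mem_map.mp hx
          exact mem_sigma.mpr ⟨mem_image_of_mem _ hy, (mem_sigma.mp y.2).2⟩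
      _ = ∑ u ∈ S, c u := by simp only [card_sigma, card_range]
  have hmeet : {j ∈ A | ¬Disjoint (W j) S} ⊆ s.biUnion t := by
    intro j hj
    obtain ⟨hjA, hjS⟩ := mem_filter.mp hj
    obtain ⟨u, hujW, hujS⟩ := not_disjoint_iff.mp hjS
    obtain ⟨x, hx, rfl⟩ := mem_image.mp hujS
    exact mem_biUnion.mpr ⟨x, hx, mem_filter.mpr ⟨hjA, hujW⟩⟩
  exact hs.trans ((hall S hSV).trans (card_le_card hmeet))

theorem exists_saturates [DecidableEq ι] [DecidableEq σ] (W : ι → Finset σ) (c : σ → ℕ)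
    (V : Finset σ) (A : Finset ι) (hWA : ∀ j ∈ A, W j ⊆ V) (hcard : ∑ u ∈ V, c u < #A) :
    ∃ i ∈ A, ∃ U, W i ⊆ U ∧ Saturates W c (A.erase i) U := by
  induction V using strongInduction generalizing A with
  | _ V ih =>
  by_cases hdeficient : ∃ S ⊆ V, S.Nonempty ∧ #{j ∈ A | ¬Disjoint (W j) S} ≤ ∑ u ∈ S, c u
  · obtain ⟨S, hSV, hS, hSA⟩ := hdeficient
    have hcard' : ∑ u ∈ V \ S, c u < #{j ∈ A | Disjoint (W j) S} := by
      have := sum_sdiff hSV (f := c)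
      have := card_filter_add_card_filter_not (s := A) (fun j => ¬Disjoint (W j) S)
      simp only [not_not] at this
      omega
    obtain ⟨i, hi, U, hiU, hU⟩ := ih (V \ S) (sdiff_ssubset hSV hS) {j ∈ A | Disjoint (W j) S}
      (fun j hj => subset_sdiff.mpr ⟨hWA j (mem_filter.mp hj).1, (mem_filter.mp hj).2⟩) hcard'
    exact ⟨i, (mem_filter.mp hi).1, U, hiU, hU.mono (erase_subset_erase i (filter_subset _ A))⟩
  · push Not at hdeficient
    obtain ⟨i, hi⟩ := card_pos.mp (hcard.trans_le' (Nat.zero_le _))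
    refine ⟨i, hi, V, hWA i hi, ?_⟩
    have hall : ∀ S ⊆ V, ∑ u ∈ S, c u ≤ #{j ∈ A.erase i | ¬Disjoint (W j) S} := by
      intro S hSV
      obtain rfl | hS := S.eq_empty_or_nonempty
      · simp
      rw [filter_erase]
      have := hdeficient S hSV hS
      have := pred_card_le_card_erase (s := {j ∈ A | ¬Disjoint (W j) S}) (a := i)
      omega
    obtain ⟨e, he, hprop⟩ := exists_demand_matching W c V (A.erase i) hall
    exact ⟨e, he, fun x => ⟨(hprop x).1, (hprop x).2, hWA _ (mem_of_mem_erase (hprop x).1)⟩⟩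

section IdemCommSemiring

variable {R : Type*} [IdemCommSemiring R]

theorem one_add_pow_eq_sum_range (x : R) (k : ℕ) :
    (1 + x) ^ k = ∑ i ∈ range (k + 1), x ^ i := by
  rw [add_comm, add_pow]
  refine sum_congr rfl fun i hi => ?_
  rw [one_pow, mul_one, natCast_eq_one (Nat.choose_pos (Nat.lt_succ_iff.mp (mem_range.mp hi))).ne',
    mul_one]

theorem one_add_pow_succ_eq {x : R} {k : ℕ} (hx : x ^ (k + 1) = 0 ∨ x ^ (k + 1) = 1) :
    (1 + x) ^ (k + 1) = (1 + x) ^ k := by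
  rw [one_add_pow_eq_sum_range, sum_range_succ, ← one_add_pow_eq_sum_range]
  rcases hx with hx | hx
  · rw [hx, add_zero]
  · rw [hx, add_eq_left_iff_le]
    exact one_le_pow_of_one_le' le_self_add k

theorem oneLinear_le_prod_pow {v : σ → R} {c : σ → ℕ}
    (hv : ∀ u, (1 + v u) ^ (c u + 1) = (1 + v u) ^ c u) {W U : Finset σ} (hWU : W ⊆ U) :
    oneLinear v W ≤ ∏ u ∈ U, (1 + v u) ^ c u := by
  have one_le : ∀ u ∈ U, 1 ≤ (1 + v u) ^ c u := fun u _ => one_le_pow_of_one_le' le_self_add _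
  refine add_le (one_le_prod' one_le) (sum_induction _ (· ≤ _) (fun _ _ => add_le) zero_le ?_)
  intro x hx
  calc v x ≤ 1 + v x := le_add_self
    _ ≤ (1 + v x) ^ (c x + 1) := le_self_pow le_self_add (Nat.succ_ne_zero _)
    _ = (1 + v x) ^ c x := hv x
    _ ≤ ∏ u ∈ U, (1 + v u) ^ c u := single_le_prod' one_le (hWU hx)

theorem prod_pow_le_prod_oneLinear [DecidableEq ι] (v : σ → R) {c : σ → ℕ} {W : ι → Finset σ}
    {U : Finset σ} {e : (U.sigma fun u => range (c u)) → ι} (he : Injective e)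
    (hmem : ∀ x, x.1.1 ∈ W (e x)) :
    ∏ u ∈ U, (1 + v u) ^ c u ≤ ∏ j ∈ univ.image e, oneLinear v (W j) := by
  calc ∏ u ∈ U, (1 + v u) ^ c u = ∏ x : U.sigma (fun u => range (c u)), (1 + v x.1.1) := by
        rw [prod_coe_sort (U.sigma _) (fun x => 1 + v x.1), prod_sigma]
        simp only [prod_const, card_range]
    _ ≤ ∏ x : U.sigma (fun u => range (c u)), oneLinear v (W (e x)) :=
        prod_le_prod' fun x _ => add_le_add_right (single_le_sum (fun _ _ => zero_le) (hmem x)) 1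
    _ = ∏ j ∈ univ.image e, oneLinear v (W j) :=
        (prod_image (f := fun j => oneLinear v (W j)) fun _ _ _ _ h => he h).symm

theorem Saturates.oneLinear_mul_prod_eq [DecidableEq ι] {v : σ → R} {c : σ → ℕ}
    (hv : ∀ u, (1 + v u) ^ (c u + 1) = (1 + v u) ^ c u) {W : ι → Finset σ} {A : Finset ι}
    {U : Finset σ} (hA : Saturates W c A U) {i : ι} (hi : W i ⊆ U) :
    oneLinear v (W i) * ∏ j ∈ A, oneLinear v (W j) = ∏ j ∈ A, oneLinear v (W j) := by
  obtain ⟨e, he, hprop⟩ := hA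
  set G := ∏ u ∈ U, (1 + v u) ^ c u
  set J := univ.image e
  have hJA : J ⊆ A := by
    intro j hj
    obtain ⟨x, -, rfl⟩ := mem_image.mp hj
    exact (hprop x).1
  have hG : IsIdempotentElem G :=
    prod_induction _ _ (fun _ _ => IsIdempotentElem.mul) IsIdempotentElem.one
      fun u _ => isIdempotentElem_pow_of_pow_succ_eq (hv u)
  have hGJ : G * ∏ j ∈ J, oneLinear v (W j) = ∏ j ∈ J, oneLinear v (W j) :=
    hG.mul_eq_right_of_le_of_le_pow (one_le_prod' fun u _ => one_le_pow_of_one_le' le_self_add _)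
      (prod_pow_le_prod_oneLinear v he fun x => (hprop x).2.1)
      (prod_le_pow_card _ _ _ fun j hj => by
        obtain ⟨x, -, rfl⟩ := mem_image.mp hj
        exact oneLinear_le_prod_pow hv (hprop x).2.2)
  refine le_antisymm ?_ (le_mul_of_one_le_left' le_self_add)
  calc oneLinear v (W i) * ∏ j ∈ A, oneLinear v (W j) ≤ G * ∏ j ∈ A, oneLinear v (W j) :=
        mul_le_mul_left (oneLinear_le_prod_pow hv hi) _
    _ = ∏ j ∈ A, oneLinear v (W j) := by
        rw [← prod_sdiff hJA, mul_left_comm, hGJ]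

end IdemCommSemiring

end

theorem one_linear_cutoff_general
    {B P : Type*} [Fintype B] [Fintype P]
    (b : B → ℕ) (p : P → ℕ) (hp : ∀ s, 1 ≤ p s)
    (l : List (Finset (B ⊕ P)))
    (hlen : (∑ s : B, (b s - 1)) + ∑ s : P, (p s - 1) < l.length) :
    ∃ l' : List (Finset (B ⊕ P)), l'.Sublist l ∧ l' ≠ l ∧
      ∀ (R : Type) [CommSemiring R], (∀ a : R, a + a = a) →
        ∀ v : B ⊕ P → R, (∀ s : B, v (Sum.inl s) ^ b s = 0) →
          (∀ s : P, v (Sum.inr s) ^ p s = 1) →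
          ∀ l'' : List (Finset (B ⊕ P)), l'.Sublist l'' → l''.Sublist l →
            (l''.map fun W => (1 : R) + ∑ x ∈ W, v x).prod =
              (l.map fun W => (1 : R) + ∑ x ∈ W, v x).prod := by
  classical
  let c : B ⊕ P → ℕ := Sum.elim (fun s => b s - 1) (fun s => p s - 1)
  obtain ⟨i, -, U, hiU, hsat⟩ := exists_saturates (fun j : Fin l.length => l[j]) c univ univ
    (fun _ _ => subset_univ _) (by simpa [c, Fintype.sum_sum_type] using hlen)
  refine ⟨l.eraseIdx i, List.eraseIdx_sublist l i, fun h => ?_, ?_⟩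
  · have := congrArg List.length h
    rw [List.length_eraseIdx_of_lt i.isLt] at this
    omega
  intro R _ ha v hvB hvP l'' h₁ h₂
  let _ : IdemCommSemiring R := { ‹CommSemiring R›, IdemSemiring.ofSemiring ha with }
  have hv : ∀ u, (1 + v u) ^ (c u + 1) = (1 + v u) ^ c u := by
    rintro (s | s)
    · exact one_add_pow_succ_eq
        (Or.inl (pow_eq_zero_of_le (show b s ≤ b s - 1 + 1 by omega) (hvB s)))
    · exact one_add_pow_succ_eq (Or.inr (by simpa [c, Nat.sub_add_cancel (hp s)] using hvP s))
  have herase : ((l.eraseIdx i).map (oneLinear v)).prod = (l.map (oneLinear v)).prod := by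
    rw [List.prod_map_eraseIdx_eq_prod_erase, ← Fin.prod_univ_fun_getElem,
      ← mul_prod_erase univ _ (mem_univ i)]
    exact (hsat.oneLinear_mul_prod_eq hv hiU).symm
  rcases List.eq_eraseIdx_or_eq_of_sublist i.isLt h₁ h₂ with rfl | rfl
  · exact herase
  · rfl

/-- over bounded variables `B` (axiom `s^{b s} = 0`) and periodic
variables `P` (axiom `s^{p s} = 1`), every product of 1-linear terms
`1 + Σ_{s∈W} s` of length exceeding `Σ_B (b s − 1) + Σ_P (p s − 1)` has a
strict subproduct `t'` with `nf(t'') = nf(t)` (i.e. equality in every model)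
for all intermediate subproducts `t' ⪯ t'' ⪯ t`. -/
theorem one_linear_cutoff
    {B P : Type*} [Fintype B] [Fintype P]
    (b : B → ℕ) (p : P → ℕ) (hb : ∀ s, 2 ≤ b s) (hp : ∀ s, 1 ≤ p s)
    (l : List (Finset (B ⊕ P))) (hne : ∀ W ∈ l, W.Nonempty)
    (hlen : (∑ s : B, (b s - 1)) + ∑ s : P, (p s - 1) < l.length) :
    ∃ l' : List (Finset (B ⊕ P)), l'.Sublist l ∧ l' ≠ l ∧
      ∀ (R : Type) [CommSemiring R], (∀ a : R, a + a = a) →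
        ∀ v : B ⊕ P → R, (∀ s : B, v (Sum.inl s) ^ b s = 0) →
          (∀ s : P, v (Sum.inr s) ^ p s = 1) →
          ∀ l'' : List (Finset (B ⊕ P)), l'.Sublist l'' → l''.Sublist l →
            (l''.map fun W => (1 : R) + ∑ x ∈ W, v x).prod =
              (l.map fun W => (1 : R) + ∑ x ∈ W, v x).prod :=
  one_linear_cutoff_general b p hp l hlen
end

section
/- Let s₀ be a periodic variable whose period p₀ divides the period of every periodic variable, B the bounded variables, P the periodic variables. For any product t = (s₀+ℓ₁)⋯(s₀+ℓ_k) where each ℓ_i is a nonempty sum over (B ∪ P) \ {s₀}, the normal form of t equals Σ_{m₁ ∈ nf(t₁)} s₀^{(k − deg m₁) mod p₀} · m₁, where t₁ = (1+ℓ₁)⋯(1+ℓ_k). -/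
/-!
Expand the product by choosing, from each factor, either `s₀` or one variable of `ℓᵢ`. A choice
taking `s₀` in `j` factors contributes `s₀ ^ j · n` with `deg n = k - j`. Reducing `n` modulo the
periods does not change its value and lowers its degree by a multiple of `p₀` (as `p₀` divides
every period), so `s₀ ^ j = s₀ ^ ((k - deg m) % p₀)` for the reduced monomial `m`. Choices that
reach a bound vanish, and idempotent addition merges the choices with equal reduced monomial;
these reduced monomials are exactly `nf(t₁)`.
-/

/-- Normal form of the 1-linear product `t₁ = (1+ℓ₁)⋯(1+ℓ_k)` over bounded
variables `B` (axiom `s^{b s} = 0`) and periodic variables `P` (axiom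
`s^{p s} = 1`): each factor chooses either `1` or one of its variables; bounded
variables must stay strictly below their bound, periodic multiplicities are
taken modulo the period. -/
def Nf1 {B P : Type*} [DecidableEq B] [DecidableEq P]
    (b : B → ℕ) (p : P → ℕ) {k : ℕ} (ℓ : Fin k → Finset (B ⊕ P)) :
    Set ((B ⊕ P) →₀ ℕ) :=
  {m | ∃ c : Fin k → Option (B ⊕ P),
    (∀ i, ∀ x, c i = some x → x ∈ ℓ i) ∧
    (∀ s : B, (Finset.univ.filter fun i => c i = some (Sum.inl s)).card < b s ∧
      m (Sum.inl s) = (Finset.univ.filter fun i => c i = some (Sum.inl s)).card) ∧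
    (∀ s : P,
      m (Sum.inr s) = (Finset.univ.filter fun i => c i = some (Sum.inr s)).card % p s)}

open Finset Finsupp

section Idempotent

variable {ι κ M : Type*} [AddCommMonoid M]

theorem nsmul_eq_self_of_add_self {a : M} (ha : a + a = a) : ∀ {n : ℕ}, n ≠ 0 → n • a = a
  | 1, _ => one_nsmul a
  | n + 2, _ => by rw [succ_nsmul, nsmul_eq_self_of_add_self ha n.succ_ne_zero, ha]

theorem sum_image_of_add_self [DecidableEq ι] (hadd : ∀ a : M, a + a = a) (s : Finset κ)
    (φ : κ → ι) (g : ι → M) : ∑ y ∈ s.image φ, g y = ∑ x ∈ s, g (φ x) :=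
  sum_image' _ fun x hx => by
    have hfiber : ∀ y ∈ s.filter (φ · = φ x), g (φ y) = g (φ x) := fun y hy =>
      congrArg g (mem_filter.1 hy).2
    have hx' : x ∈ s.filter (φ · = φ x) := mem_filter.2 ⟨hx, rfl⟩
    rw [sum_congr rfl hfiber, Finset.sum_const,
      nsmul_eq_self_of_add_self (hadd _) (card_ne_zero_of_mem hx')]

end Idempotent

section Monomials

variable {X R : Type*}

noncomputable def reduceMod (q : X → ℕ) (n : X →₀ ℕ) : X →₀ ℕ :=
  onFinset n.support (fun x => n x % q x) fun x hx =>
    mem_support_iff.2 fun h => hx (by rw [h, Nat.zero_mod])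

@[simp]
theorem reduceMod_apply (q : X → ℕ) (n : X →₀ ℕ) (x : X) : reduceMod q n x = n x % q x := rfl

theorem support_reduceMod_subset (q : X → ℕ) (n : X →₀ ℕ) :
    (reduceMod q n).support ⊆ n.support :=
  support_onFinset_subset

theorem prod_pow_reduceMod [CommMonoid R] {q : X → ℕ} {v : X → R} (hv : ∀ x, v x ^ q x = 1)
    (n : X →₀ ℕ) : (reduceMod q n).prod (fun x e => v x ^ e) = n.prod fun x e => v x ^ e := by
  rw [prod_of_support_subset _ (support_reduceMod_subset q n) _ fun x _ => pow_zero _]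
  exact prod_congr rfl fun x _ => (pow_eq_pow_mod _ (hv x)).symm

theorem exists_degree_eq_degree_reduceMod_add_mul {q : X → ℕ} {d : ℕ} (hd : ∀ x, d ∣ q x)
    (n : X →₀ ℕ) : ∃ j, degree n = degree (reduceMod q n) + d * j := by
  choose r hr using hd
  refine ⟨∑ x ∈ n.support, r x * (n x / q x), ?_⟩
  rw [degree_apply, degree_apply, sum_subset (support_reduceMod_subset q n)
    fun x _ hx => notMem_support_iff.1 hx, Finset.mul_sum, ← sum_add_distrib]
  refine sum_congr rfl fun x _ => ?_
  rw [reduceMod_apply, ← mul_assoc, ← hr, Nat.mod_add_div]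

theorem prod_pow_eq_zero_of_le [CommMonoidWithZero R] {v : X → R} {n : X →₀ ℕ} {x : X} {e : ℕ}
    (hx : v x ^ e = 0) (he : e ≤ n x) : n.prod (fun y e => v y ^ e) = 0 := by
  classical
  rw [prod_of_support_subset n (subset_insert x n.support) _ fun y _ => pow_zero _]
  exact prod_eq_zero (mem_insert_self x _) (pow_eq_zero_of_le he hx)

variable {ι : Type*} [Fintype ι]

/-- `c i = none` chooses the summand `1` of the `i`-th factor. -/
noncomputable def choiceMonomial (c : ι → Option X) : X →₀ ℕ :=
  ∑ i, (c i).elim 0 (single · 1)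

theorem choiceMonomial_apply [DecidableEq X] (c : ι → Option X) (x : X) :
    choiceMonomial c x = #{i | c i = some x} := by
  rw [choiceMonomial, finsetSum_apply, card_filter]
  refine sum_congr rfl fun i _ => ?_
  cases c i <;> simp [single_apply]

theorem card_none_add_degree_choiceMonomial [DecidableEq X] (c : ι → Option X) :
    #{i | c i = none} + degree (choiceMonomial c) = Fintype.card ι := by
  rw [choiceMonomial, map_sum, card_filter, ← sum_add_distrib, ← Finset.card_univ,
    Finset.card_eq_sum_ones]
  refine sum_congr rfl fun i _ => ?_
  cases c i <;> simp

theorem prod_elim_eq_pow_mul_prod_choiceMonomial [DecidableEq X] [CommMonoid R] (a : R)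
    (v : X → R) (c : ι → Option X) :
    ∏ i, (c i).elim a v = a ^ #{i | c i = none} * (choiceMonomial c).prod fun x e => v x ^ e := by
  rw [choiceMonomial, ← prod_finsetSum_index (fun _ => pow_zero _) (fun _ _ _ => pow_add _ _ _),
    ← prod_const, prod_filter, ← prod_mul_distrib]
  refine prod_congr rfl fun i _ => ?_
  cases c i <;> simp

theorem pow_card_none_mul_prod_eq_reduceMod [DecidableEq X] [CommMonoid R] {q : X → ℕ} {d : ℕ}
    {a : R} {v : X → R} (hd : ∀ x, d ∣ q x) (ha : a ^ d = 1) (hv : ∀ x, v x ^ q x = 1)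
    (c : ι → Option X) :
    a ^ #{i | c i = none} * (choiceMonomial c).prod (fun x e => v x ^ e) =
      a ^ ((Fintype.card ι - degree (reduceMod q (choiceMonomial c))) % d) *
        (reduceMod q (choiceMonomial c)).prod fun x e => v x ^ e := by
  obtain ⟨j, hj⟩ := exists_degree_eq_degree_reduceMod_add_mul hd (choiceMonomial c)
  have hcard := card_none_add_degree_choiceMonomial c
  rw [← pow_eq_pow_mod _ ha, show Fintype.card ι - degree (reduceMod q (choiceMonomial c)) =
    #{i | c i = none} + d * j by omega, pow_add, pow_mul, ha, one_pow, mul_one,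
    prod_pow_reduceMod hv]

end Monomials

section Anchored

variable {B P ι R : Type*} [Fintype ι] [DecidableEq ι]

noncomputable def admissibleChoices (b : B → ℕ) (ℓ : ι → Finset (B ⊕ P)) :
    Finset (ι → Option (B ⊕ P)) := by
  classical
  exact (Fintype.piFinset fun i => insertNone (ℓ i)).filter
    fun c => ∀ s, choiceMonomial c (.inl s) < b s

theorem mem_admissibleChoices {b : B → ℕ} {ℓ : ι → Finset (B ⊕ P)} {c : ι → Option (B ⊕ P)} :
    c ∈ admissibleChoices b ℓ ↔
      (∀ i x, c i = some x → x ∈ ℓ i) ∧ ∀ s, choiceMonomial c (.inl s) < b s := by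
  simp [admissibleChoices, mem_insertNone]

theorem coe_image_admissibleChoices [DecidableEq B] [DecidableEq P] (b : B → ℕ) (p : P → ℕ)
    {k : ℕ} (ℓ : Fin k → Finset (B ⊕ P)) :
    ↑((admissibleChoices b ℓ).image fun c => reduceMod (Sum.elim 0 p) (choiceMonomial c)) =
      Nf1 b p ℓ := by
  ext m
  simp only [coe_image, Set.mem_image, mem_coe, mem_admissibleChoices, Nf1, Set.mem_ofPred_eq,
    Finsupp.ext_iff, Sum.forall, reduceMod_apply, choiceMonomial_apply, Sum.elim_inl,
    Sum.elim_inr, Pi.zero_apply, Nat.mod_zero]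
  exact exists_congr fun c => by grind

theorem sum_admissibleChoices [CommSemiring R] {b : B → ℕ} {v : B ⊕ P → R}
    (hvb : ∀ s, v (.inl s) ^ b s = 0) (ℓ : ι → Finset (B ⊕ P)) (g : (ι → Option (B ⊕ P)) → R) :
    ∑ c ∈ admissibleChoices b ℓ, g c * (choiceMonomial c).prod (fun x e => v x ^ e) =
      ∑ c ∈ Fintype.piFinset fun i => insertNone (ℓ i),
        g c * (choiceMonomial c).prod fun x e => v x ^ e := by
  classical
  rw [admissibleChoices]
  refine sum_filter_of_ne fun c _ hc s => ?_
  by_contra! hs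
  exact hc (by rw [prod_pow_eq_zero_of_le (hvb s) hs, mul_zero])

end Anchored

theorem s0_anchored_normal_form_general
    {B P : Type*} [DecidableEq B] [DecidableEq P]
    (b : B → ℕ) (p : P → ℕ)
    (s₀ : P) (hdvd : ∀ s, p s₀ ∣ p s)
    {k : ℕ} (ℓ : Fin k → Finset (B ⊕ P))
    {R : Type*} [CommSemiring R] (hadd : ∀ a : R, a + a = a)
    (v : B ⊕ P → R) (hvb : ∀ s : B, v (Sum.inl s) ^ b s = 0)
    (hvp : ∀ s : P, v (Sum.inr s) ^ p s = 1) :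
    ∃ F : Finset ((B ⊕ P) →₀ ℕ), (↑F : Set ((B ⊕ P) →₀ ℕ)) = Nf1 b p ℓ ∧
      (∏ i, (v (Sum.inr s₀) + ∑ x ∈ ℓ i, v x)) =
        ∑ m ∈ F, v (Sum.inr s₀) ^ ((k - m.sum fun _ e => e) % p s₀) *
          (m.prod fun x e => v x ^ e) := by
  set a := v (Sum.inr s₀)
  -- Bounded variables get period `0`, so that `n % 0 = n` leaves their exponents unreduced.
  set q : B ⊕ P → ℕ := Sum.elim 0 p
  have hdiv : ∀ x, p s₀ ∣ q x := Sum.forall.2 ⟨fun _ => dvd_zero _, hdvd⟩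
  have hper : ∀ x, v x ^ q x = 1 := Sum.forall.2 ⟨fun _ => pow_zero _, hvp⟩
  refine ⟨(admissibleChoices b ℓ).image fun c => reduceMod q (choiceMonomial c),
    coe_image_admissibleChoices b p ℓ, ?_⟩
  calc ∏ i, (a + ∑ x ∈ ℓ i, v x)
      = ∑ c ∈ Fintype.piFinset fun i => insertNone (ℓ i),
          a ^ #{i | c i = none} * (choiceMonomial c).prod fun x e => v x ^ e := by
        simp_rw [add_sum_eq_sum_insertNone, prod_univ_sum,
          prod_elim_eq_pow_mul_prod_choiceMonomial]
    _ = ∑ c ∈ admissibleChoices b ℓ,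
          a ^ #{i | c i = none} * (choiceMonomial c).prod fun x e => v x ^ e :=
        (sum_admissibleChoices hvb ℓ _).symm
    _ = ∑ c ∈ admissibleChoices b ℓ,
          a ^ ((k - degree (reduceMod q (choiceMonomial c))) % p s₀) *
            (reduceMod q (choiceMonomial c)).prod fun x e => v x ^ e := by
        refine sum_congr rfl fun c _ => ?_
        rw [pow_card_none_mul_prod_eq_reduceMod hdiv (hvp s₀) hper, Fintype.card_fin]
    _ = _ := (sum_image_of_add_self hadd _ _
          fun m => a ^ ((k - degree m) % p s₀) * m.prod fun x e => v x ^ e).symm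

/-- if the period `p s₀` of `s₀` divides every period, then for
`t = (s₀+ℓ₁)⋯(s₀+ℓ_k)` with `s₀ ∉ ℓᵢ`, the normal form of `t` equals
`Σ_{m₁ ∈ nf(t₁)} s₀^{(k − deg m₁) mod p s₀} · m₁` where `t₁ = (1+ℓ₁)⋯(1+ℓ_k)`
(the equality holding in every idempotent commutative semiring model). -/
theorem s0_anchored_normal_form
    {B P : Type*} [DecidableEq B] [DecidableEq P]
    (b : B → ℕ) (p : P → ℕ) (hb : ∀ s, 2 ≤ b s) (hp : ∀ s, 2 ≤ p s)
    (s₀ : P) (hdvd : ∀ s, p s₀ ∣ p s)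
    {k : ℕ} (ℓ : Fin k → Finset (B ⊕ P))
    (hne : ∀ i, (ℓ i).Nonempty) (hs₀ : ∀ i, Sum.inr s₀ ∉ ℓ i)
    {R : Type*} [CommSemiring R] (hadd : ∀ a : R, a + a = a)
    (v : B ⊕ P → R) (hvb : ∀ s : B, v (Sum.inl s) ^ b s = 0)
    (hvp : ∀ s : P, v (Sum.inr s) ^ p s = 1) :
    ∃ F : Finset ((B ⊕ P) →₀ ℕ), (↑F : Set ((B ⊕ P) →₀ ℕ)) = Nf1 b p ℓ ∧
      (∏ i, (v (Sum.inr s₀) + ∑ x ∈ ℓ i, v x)) =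
        ∑ m ∈ F, v (Sum.inr s₀) ^ ((k - m.sum fun _ e => e) % p s₀) *
          (m.prod fun x e => v x ^ e) :=
  s0_anchored_normal_form_general b p s₀ hdvd ℓ hadd v hvb hvp
end

section
/- Let s₀ be a periodic variable whose period p₀ divides all other periods. Every product t of linear terms each containing s₀, of length exceeding Σ_{bounded s}(b(s)−1) + Σ_{periodic s}(p(s)−1), admits a strict subproduct t' with nf(t') = nf(t). -/
/-!
Expand the product into monomials indexed by choice functions `σ`, where `σ i = none` picks the
anchor `s₀` from the `i`-th factor and `σ i = some x` picks the summand `x`. In an idempotent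
semiring a subproduct has the same expansion as soon as every monomial of the full product is
zero or equals a monomial of the subproduct. A monomial vanishes unless every bounded letter
occurs fewer than `b s` times; reducing the other counts modulo the periods (the anchor absorbs
the change of total degree, because `p s₀` divides every period) leaves a count vector below
`cutoffCap`. Fix a choice function `τ` of largest support among those below `cutoffCap`: an
exchange argument verifies Hall's condition, so every count vector below `cutoffCap` is realized
on `supp τ`, which has at most `∑ cutoffCap` elements. Any `T ⊇ supp τ` omitting exactly `p s₀`
factors gives the subproduct, the omitted factors being replaced by `s₀ ^ p s₀ = 1`.
-/

open Finset

namespace AnchoredCutoff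

section Idempotent

variable {R γ : Type*} [AddCommMonoid R] {s t : Finset γ} {f : γ → R}

theorem add_sum_eq_sum_of_mem (hidem : ∀ a : R, a + a = a) {a : γ} (ha : a ∈ s) :
    f a + ∑ x ∈ s, f x = ∑ x ∈ s, f x := by
  classical
  rw [← add_sum_erase s f ha, ← add_assoc, hidem]

theorem sum_eq_sum_of_subset_of_forall_add_eq (hst : s ⊆ t)
    (habs : ∀ a ∈ t, f a + ∑ x ∈ s, f x = ∑ x ∈ s, f x) :
    ∑ x ∈ t, f x = ∑ x ∈ s, f x := by
  classical
  rw [← sum_sdiff hst]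
  exact sum_induction f (· + ∑ x ∈ s, f x = ∑ x ∈ s, f x)
    (fun a b ha hb => by rw [add_assoc, hb, ha]) (zero_add _)
    fun a ha => habs a (sdiff_subset ha)

end Idempotent

section Choices

variable {ι α : Type*} [Fintype ι]

def choices [DecidableEq ι] (W : ι → Finset α) : Finset (ι → Option α) :=
  Fintype.piFinset fun i => (W i).insertNone

theorem mem_choices [DecidableEq ι] {W : ι → Finset α} {σ : ι → Option α} :
    σ ∈ choices W ↔ ∀ i x, σ i = some x → x ∈ W i := by
  simp [choices, mem_insertNone]

theorem choices_mono [DecidableEq ι] {W W' : ι → Finset α} (h : ∀ i, W i ⊆ W' i) :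
    choices W ⊆ choices W' :=
  fun _ hσ => mem_choices.2 fun i x hx => h i (mem_choices.1 hσ i x hx)

variable [DecidableEq α]

def count (σ : ι → Option α) (x : α) : ℕ := #{i | σ i = some x}

def supp (σ : ι → Option α) : Finset ι := {i | σ i ≠ none}

theorem sum_count (σ : ι → Option α) (L : Finset α) :
    ∑ x ∈ L, count σ x = #{i | ∃ x ∈ L, σ i = some x} := by
  classical
  have h : ({i | ∃ x ∈ L, σ i = some x} : Finset ι) = L.biUnion fun x => {i | σ i = some x} := by
    ext i; simp
  rw [h, card_biUnion fun x _ y _ hxy => disjoint_filter.2 fun i _ hx hy =>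
    hxy (Option.some_injective _ (hx.symm.trans hy))]
  rfl

theorem card_supp [Fintype α] (σ : ι → Option α) : #(supp σ) = ∑ x, count σ x := by
  rw [sum_count]
  congr 1
  ext i
  simp [supp, Option.ne_none_iff_exists']

theorem card_none_add_sum_count [Fintype α] (σ : ι → Option α) :
    #{i | σ i = none} + ∑ x, count σ x = Fintype.card ι := by
  rw [← card_supp, supp, card_filter_add_card_filter_not, card_univ]

variable [DecidableEq ι]

theorem count_eq_zero {W : ι → Finset α} {σ : ι → Option α} (hσ : σ ∈ choices W) {x : α}
    (hx : ∀ i, x ∉ W i) : count σ x = 0 :=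
  card_eq_zero.2 <| filter_eq_empty_iff.2 fun i _ h => hx i (mem_choices.1 hσ i x h)

theorem exists_mem_choices_count_eq_of_le {W : ι → Finset α} {σ : ι → Option α}
    (hσ : σ ∈ choices W) {m : α → ℕ} (hm : m ≤ count σ) :
    ∃ σ₁ ∈ choices W, count σ₁ = m := by
  choose K hKσ hKcard using fun x => exists_subset_card_eq (hm x)
  refine ⟨fun i => (σ i).filter fun x => i ∈ K x, mem_choices.2 fun i x hx => ?_, ?_⟩
  · exact mem_choices.1 hσ i x (Option.eq_some_of_filter_eq_some hx)
  · ext x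
    rw [← hKcard x, count]
    congr 1
    ext i
    simp only [mem_filter, mem_univ, true_and, Option.filter_eq_some_iff, decide_eq_true_eq]
    exact ⟨And.right, fun hi => ⟨(mem_filter.1 (hKσ x hi)).2, hi⟩⟩

theorem exists_mem_choices_count_eq_of_hall (σ : ι → Option α) (W : ι → Finset α)
    (hall : ∀ L : Finset α, ∑ x ∈ L, count σ x ≤ #{j | ∃ x ∈ L, x ∈ W j}) :
    ∃ σ' ∈ choices W, count σ' = count σ := by
  let Q := {q : ι × α // σ q.1 = some q.2}
  obtain ⟨f, hf, hfW⟩ := (all_card_le_biUnion_card_iff_exists_injective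
    fun q : Q => ({j | q.1.2 ∈ W j} : Finset ι)).1 fun A => by
      let L := A.image fun q => q.1.2
      calc #A ≤ #{i | ∃ x ∈ L, σ i = some x} := by
            refine card_le_card_of_injOn (fun q => q.1.1) (fun q hq => ?_) fun q _ q' _ h => ?_
            · simpa [L] using ⟨q, hq, q.2⟩
            · have := q.2.symm.trans ((congrArg σ h).trans q'.2)
              exact Subtype.ext (Prod.ext h (Option.some_injective _ this))
        _ = ∑ x ∈ L, count σ x := (sum_count σ L).symm
        _ ≤ #{j | ∃ x ∈ L, x ∈ W j} := hall L
        _ = #(A.biUnion fun q => {j | q.1.2 ∈ W j}) := by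
            congr 1
            ext j
            simp [L]
  let σ' := Function.extend f (fun q => some q.1.2) fun _ => none
  have hσ' : ∀ j x, σ' j = some x ↔ ∃ q : Q, q.1.2 = x ∧ f q = j := by
    intro j x
    by_cases hj : ∃ q, f q = j
    · obtain ⟨q, rfl⟩ := hj
      simp only [σ', hf.extend_apply, Option.some_inj]
      exact ⟨fun h => ⟨q, h, rfl⟩, fun ⟨q', hq', hq'q⟩ => hf hq'q ▸ hq'⟩
    · simp only [σ', Function.extend_apply' _ _ _ hj, reduceCtorEq, false_iff]
      exact fun ⟨q, _, hq⟩ => hj ⟨q, hq⟩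
  refine ⟨σ', mem_choices.2 fun j x hx => ?_, funext fun x => ?_⟩
  · obtain ⟨q, rfl, rfl⟩ := (hσ' j x).1 hx
    simpa using hfW q
  · refine (card_bij (fun i hi => f ⟨(i, x), (mem_filter.1 hi).2⟩) (fun i hi => ?_)
      (fun i hi i' hi' h => ?_) fun j hj => ?_).symm
    · simpa using (hσ' _ x).2 ⟨_, rfl, rfl⟩
    · exact congrArg (fun q : Q => q.1.1) (hf h)
    · obtain ⟨q, rfl, rfl⟩ := (hσ' j x).1 (mem_filter.1 hj).2
      exact ⟨q.1.1, by simpa using q.2, rfl⟩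

variable (W : ι → Finset α) (cap : α → ℕ)

theorem exists_mem_choices_card_supp_ge {σ τ : ι → Option α} (hσ : σ ∈ choices W)
    (hσcap : count σ ≤ cap) (hτ : τ ∈ choices W) (hτcap : count τ ≤ cap) (L : Finset α) :
    ∃ μ ∈ choices W, count μ ≤ cap ∧
      #{i | ∃ x ∈ L, σ i = some x} + #{j ∈ supp τ | ¬∃ x ∈ L, x ∈ W j} ≤ #(supp μ) := by
  let μ j := if ∃ x ∈ L, x ∈ W j then (σ j).filter (· ∈ L) else τ j
  have hμ : ∀ j x, μ j = some x ↔
      ((∃ x ∈ L, x ∈ W j) ∧ σ j = some x ∧ x ∈ L) ∨ ((¬∃ x ∈ L, x ∈ W j) ∧ τ j = some x) := by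
    intro j x
    by_cases hj : ∃ x ∈ L, x ∈ W j <;> simp [μ, hj, Option.filter_eq_some_iff]
  refine ⟨μ, mem_choices.2 fun j x hx => ?_, fun x => ?_, ?_⟩
  · rcases (hμ j x).1 hx with ⟨-, hσj, -⟩ | ⟨-, hτj⟩
    exacts [mem_choices.1 hσ j x hσj, mem_choices.1 hτ j x hτj]
  · by_cases hx : x ∈ L
    · refine (card_le_card fun j hj => ?_).trans (hσcap x)
      simp only [mem_filter, mem_univ, true_and, hμ] at hj ⊢
      rcases hj with ⟨-, hσj, -⟩ | ⟨hN, hτj⟩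
      exacts [hσj, absurd ⟨x, hx, mem_choices.1 hτ j x hτj⟩ hN]
    · refine (card_le_card fun j hj => ?_).trans (hτcap x)
      simp only [mem_filter, mem_univ, true_and, hμ] at hj ⊢
      rcases hj with ⟨-, -, hxL⟩ | ⟨-, hτj⟩
      exacts [absurd hxL hx, hτj]
  · rw [← card_union_of_disjoint]
    · refine card_le_card fun j hj => ?_
      simp only [supp, mem_union, mem_filter, mem_univ, true_and] at hj ⊢
      intro hμj
      rcases hj with ⟨x, hxL, hσj⟩ | ⟨hτj, hN⟩
      · simpa [hμj] using (hμ j x).2 (.inl ⟨⟨x, hxL, mem_choices.1 hσ j x hσj⟩, hσj, hxL⟩)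
      · exact hτj (by simpa [μ, hN] using hμj)
    · refine disjoint_left.2 fun j hj hj' => (mem_filter.1 hj').2 ?_
      obtain ⟨x, hxL, hσj⟩ := (mem_filter.1 hj).2
      exact ⟨x, hxL, mem_choices.1 hσ j x hσj⟩

theorem sum_count_le_of_forall_card_supp_le {σ τ : ι → Option α} (hσ : σ ∈ choices W)
    (hσcap : count σ ≤ cap) (hτ : τ ∈ choices W) (hτcap : count τ ≤ cap)
    (hmax : ∀ μ ∈ choices W, count μ ≤ cap → #(supp μ) ≤ #(supp τ)) (L : Finset α) :
    ∑ x ∈ L, count σ x ≤ #{j ∈ supp τ | ∃ x ∈ L, x ∈ W j} := by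
  obtain ⟨μ, hμ, hμcap, hμcard⟩ := exists_mem_choices_card_supp_ge W cap hσ hσcap hτ hτcap L
  have := hmax μ hμ hμcap
  have := card_filter_add_card_filter_not (s := supp τ) fun j => ∃ x ∈ L, x ∈ W j
  rw [sum_count]
  omega

theorem exists_card_eq_forall_exists_count_eq [Fintype α] {n : ℕ} (hcap : ∑ x, cap x ≤ n)
    (hn : n ≤ Fintype.card ι) :
    ∃ T : Finset ι, #T = n ∧ ∀ σ ∈ choices W, count σ ≤ cap →
      ∃ σ' ∈ choices (T.piecewise W fun _ => ∅), count σ' = count σ := by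
  classical
  obtain ⟨τ, hτ, hmax⟩ := exists_max_image ((choices W).filter (count · ≤ cap))
    (fun σ => #(supp σ)) ⟨fun _ => none, by simp [mem_choices, Pi.le_def, count]⟩
  rw [mem_filter] at hτ
  obtain ⟨T, hτT, hT⟩ := exists_superset_card_eq
    ((card_supp τ).trans_le ((sum_le_sum fun x _ => hτ.2 x).trans hcap)) hn
  refine ⟨T, hT, fun σ hσ hσcap => ?_⟩
  have hall (L : Finset α) :
      ∑ x ∈ L, count σ x ≤ #{j | ∃ x ∈ L, x ∈ (supp τ).piecewise W (fun _ => ∅) j} := by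
    refine (sum_count_le_of_forall_card_supp_le W cap hσ hσcap hτ.1 hτ.2
      (fun μ hμ hμcap => hmax μ (mem_filter.2 ⟨hμ, hμcap⟩)) L).trans_eq ?_
    congr 1
    ext j
    by_cases hj : j ∈ supp τ <;> simp [hj]
  obtain ⟨σ', hσ', hcount⟩ := exists_mem_choices_count_eq_of_hall σ _ hall
  refine ⟨σ', choices_mono (fun i => ?_) hσ', hcount⟩
  by_cases hi : i ∈ supp τ
  · simp [hi, hτT hi]
  · simp [hi]

end Choices

section Expansion

variable {ι α R : Type*} [Fintype ι] [DecidableEq ι]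

theorem prod_add_sum_eq_sum_choices [CommSemiring R] (y : R) (v : α → R) (W : ι → Finset α) :
    ∏ i, (y + ∑ x ∈ W i, v x) = ∑ σ ∈ choices W, ∏ i, (σ i).elim y v := by
  rw [choices, ← prod_univ_sum (fun i => (W i).insertNone) fun _ o => o.elim y v]
  congr with i
  rw [sum_insertNone]
  rfl

theorem prod_add_sum_piecewise [CommSemiring R] (y : R) (v : α → R) (W : ι → Finset α)
    (T : Finset ι) :
    ∏ i, (y + ∑ x ∈ T.piecewise W (fun _ => ∅) i, v x) =
      (∏ i ∈ T, (y + ∑ x ∈ W i, v x)) * y ^ #Tᶜ := by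
  rw [← prod_const, ← prod_mul_prod_compl T]
  congr 1 <;> refine prod_congr rfl fun i hi => ?_
  · rw [piecewise_eq_of_mem _ _ _ hi]
  · rw [piecewise_eq_of_notMem _ _ _ (mem_compl.1 hi), sum_empty, add_zero]

end Expansion

section Monomial

variable {ι α R : Type*} [Fintype ι] [DecidableEq α] [Fintype α] [CommMonoid R]

theorem prod_elim_eq (y : R) (v : α → R) (σ : ι → Option α) :
    ∏ i, (σ i).elim y v = y ^ #{i | σ i = none} * ∏ x, v x ^ count σ x := by
  rw [← prod_fiberwise univ σ, Fintype.prod_option]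
  congr 1
  · exact prod_eq_pow_card fun i hi => by rw [(mem_filter.1 hi).2]; rfl
  · exact prod_congr rfl fun x _ => prod_eq_pow_card fun i hi => by rw [(mem_filter.1 hi).2]; rfl

theorem prod_elim_eq_of_modEq {y : R} {n : ℕ} (hy : y ^ n = 1) {v : α → R}
    {σ σ' : ι → Option α} (hv : ∀ x, v x ^ count σ' x = v x ^ count σ x)
    (hmod : ∑ x, count σ' x ≡ ∑ x, count σ x [MOD n]) :
    ∏ i, (σ' i).elim y v = ∏ i, (σ i).elim y v := by
  have hnone : #{i | σ' i = none} ≡ #{i | σ i = none} [MOD n] := by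
    refine Nat.ModEq.add_right_cancel hmod ?_
    rw [card_none_add_sum_count, card_none_add_sum_count]
  rw [prod_elim_eq, prod_elim_eq, pow_eq_pow_mod _ hy, hnone, ← pow_eq_pow_mod _ hy]
  simp only [hv]

end Monomial

section Cutoff

variable {B P : Type*} [Fintype B] [Fintype P] [DecidableEq B] [DecidableEq P]

def cutoffCap (b : B → ℕ) (p : P → ℕ) (s₀ : P) : B ⊕ P → ℕ :=
  Function.update (Sum.elim (fun s => b s - 1) fun s => p s - 1) (.inr s₀) 0

theorem sum_cutoffCap_add (b : B → ℕ) (p : P → ℕ) (s₀ : P) :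
    ∑ x, cutoffCap b p s₀ x + (p s₀ - 1) = ∑ s, (b s - 1) + ∑ s, (p s - 1) := by
  rw [cutoffCap, sum_update_of_mem (mem_univ _), zero_add, sdiff_singleton_eq_erase]
  exact (sum_erase_add _ _ (mem_univ _)).trans (Fintype.sum_sum_type _)

variable {R : Type*} [CommSemiring R] {b : B → ℕ} {p : P → ℕ} {s₀ : P} {v : B ⊕ P → R}
  {ι : Type*} [Fintype ι] [DecidableEq ι] {W W' : ι → Finset (B ⊕ P)}

theorem prod_elim_eq_zero_or_exists_mem_choices (hp : ∀ s, 1 ≤ p s) (hdvd : ∀ s, p s₀ ∣ p s)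
    (hv0 : ∀ s, v (.inl s) ^ b s = 0) (hv1 : ∀ s, v (.inr s) ^ p s = 1)
    (hs₀ : ∀ i, .inr s₀ ∉ W i)
    (hW' : ∀ σ ∈ choices W, count σ ≤ cutoffCap b p s₀ → ∃ σ' ∈ choices W', count σ' = count σ)
    {σ : ι → Option (B ⊕ P)} (hσ : σ ∈ choices W) :
    ∏ i, (σ i).elim (v (.inr s₀)) v = 0 ∨
      ∃ σ' ∈ choices W', ∏ i, (σ' i).elim (v (.inr s₀)) v = ∏ i, (σ i).elim (v (.inr s₀)) v := by
  by_cases hzero : ∃ s, b s ≤ count σ (.inl s)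
  · obtain ⟨s, hs⟩ := hzero
    rw [prod_elim_eq]
    exact .inl <| mul_eq_zero_of_right _ <| prod_eq_zero (mem_univ (.inl s)) <|
      pow_eq_zero_of_le hs (hv0 s)
  push Not at hzero
  let m : B ⊕ P → ℕ := Sum.elim (fun s => count σ (.inl s)) fun s => count σ (.inr s) % p s
  obtain ⟨σ₁, hσ₁, hσ₁m⟩ := exists_mem_choices_count_eq_of_le hσ (m := m) <| by
    rintro (s | s)
    exacts [le_rfl, Nat.mod_le _ _]
  obtain ⟨σ', hσ', hσ'm⟩ := hW' σ₁ hσ₁ <| by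
    rintro (s | s)
    · simpa [hσ₁m, m, cutoffCap] using Nat.le_sub_one_of_lt (hzero s)
    · by_cases hs : s = s₀
      · subst hs
        simp [hσ₁m, m, cutoffCap, count_eq_zero hσ hs₀]
      · simpa [hσ₁m, m, cutoffCap, hs] using Nat.le_sub_one_of_lt (Nat.mod_lt _ (hp s))
  refine .inr ⟨σ', hσ', prod_elim_eq_of_modEq (hv1 s₀) ?_ ?_⟩
  · rintro (s | s)
    · rw [hσ'm, hσ₁m]
      rfl
    · rw [hσ'm, hσ₁m]
      exact (pow_eq_pow_mod _ (hv1 s)).symm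
  · rw [hσ'm, hσ₁m]
    refine Nat.ModEq.sum fun x _ => ?_
    rcases x with s | s
    exacts [rfl, (Nat.mod_modEq _ _).of_dvd (hdvd s)]

theorem prod_eq_prod_of_forall_exists_count_eq (hidem : ∀ a : R, a + a = a)
    (hp : ∀ s, 1 ≤ p s) (hdvd : ∀ s, p s₀ ∣ p s)
    (hv0 : ∀ s, v (.inl s) ^ b s = 0) (hv1 : ∀ s, v (.inr s) ^ p s = 1)
    (hs₀ : ∀ i, .inr s₀ ∉ W i) {T : Finset ι} (hTc : #Tᶜ = p s₀)
    (hT : ∀ σ ∈ choices W, count σ ≤ cutoffCap b p s₀ →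
      ∃ σ' ∈ choices (T.piecewise W fun _ => ∅), count σ' = count σ) :
    ∏ i ∈ T, (v (.inr s₀) + ∑ x ∈ W i, v x) = ∏ i, (v (.inr s₀) + ∑ x ∈ W i, v x) := by
  have hsub : choices (T.piecewise W fun _ => ∅) ⊆ choices W := choices_mono fun i => by
    by_cases hi : i ∈ T <;> simp [hi]
  calc ∏ i ∈ T, (v (.inr s₀) + ∑ x ∈ W i, v x)
      = (∏ i ∈ T, (v (.inr s₀) + ∑ x ∈ W i, v x)) * v (.inr s₀) ^ #Tᶜ := by
        rw [hTc, hv1, mul_one]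
    _ = ∑ σ ∈ choices (T.piecewise W fun _ => ∅), ∏ i, (σ i).elim (v (.inr s₀)) v := by
        rw [← prod_add_sum_piecewise, prod_add_sum_eq_sum_choices]
    _ = ∑ σ ∈ choices W, ∏ i, (σ i).elim (v (.inr s₀)) v := by
        refine (sum_eq_sum_of_subset_of_forall_add_eq hsub fun σ hσ => ?_).symm
        rcases prod_elim_eq_zero_or_exists_mem_choices hp hdvd hv0 hv1 hs₀ hT hσ with
          h0 | ⟨σ', hσ', heq⟩
        · rw [h0, zero_add]
        · rw [← heq]
          exact add_sum_eq_sum_of_mem (f := fun τ => ∏ i, (τ i).elim (v (.inr s₀)) v) hidem hσ'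
    _ = ∏ i, (v (.inr s₀) + ∑ x ∈ W i, v x) := (prod_add_sum_eq_sum_choices _ _ _).symm

end Cutoff

theorem exists_sublist_length_eq_forall_prod_map_eq {β : Type*} (l : List β)
    (T : Finset (Fin l.length)) :
    ∃ l' : List β, l'.Sublist l ∧ l'.length = #T ∧
      ∀ {M : Type*} [CommMonoid M] (g : β → M), (l'.map g).prod = ∏ i ∈ T, g l[i] := by
  let m := (List.finRange l.length).filter (· ∈ T)
  have hm : m.Nodup := (List.nodup_finRange _).filter _
  have hmT : m.toFinset = T := by
    ext i
    simp [m]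
  refine ⟨m.map l.get, ?_, ?_, fun g => ?_⟩
  · simpa using (List.filter_sublist (l := List.finRange l.length)).map l.get
  · rw [List.length_map, ← List.toFinset_card_of_nodup hm, hmT]
  · rw [List.map_map, ← hmT, List.prod_toFinset _ hm]
    rfl

end AnchoredCutoff

open AnchoredCutoff

theorem s0_anchored_cutoff_dvd_general
    {B P : Type*} [Fintype B] [Fintype P]
    (b : B → ℕ) (p : P → ℕ) (hp : ∀ s, 1 ≤ p s)
    (s₀ : P) (hdvd : ∀ s, p s₀ ∣ p s)
    (l : List (Finset (B ⊕ P)))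
    (hs₀ : ∀ W ∈ l, Sum.inr s₀ ∉ W)
    (hlen : (∑ s : B, (b s - 1)) + ∑ s : P, (p s - 1) < l.length) :
    ∃ l' : List (Finset (B ⊕ P)), l'.Sublist l ∧ l' ≠ l ∧
      ∀ (R : Type) [CommSemiring R], (∀ a : R, a + a = a) →
        ∀ v : B ⊕ P → R, (∀ s : B, v (Sum.inl s) ^ b s = 0) →
          (∀ s : P, v (Sum.inr s) ^ p s = 1) →
          (l'.map fun W => v (Sum.inr s₀) + ∑ x ∈ W, v x).prod =
            (l.map fun W => v (Sum.inr s₀) + ∑ x ∈ W, v x).prod := by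
  classical
  have hps₀ := hp s₀
  have hcap : ∑ x, cutoffCap b p s₀ x + p s₀ ≤ l.length := by
    have := sum_cutoffCap_add b p s₀
    omega
  obtain ⟨T, hTcard, hT⟩ := exists_card_eq_forall_exists_count_eq (fun i : Fin l.length => l[i])
    (cutoffCap b p s₀) (n := l.length - p s₀) (by omega) (by simp)
  obtain ⟨l', hl'l, hl'len, hl'prod⟩ := exists_sublist_length_eq_forall_prod_map_eq l T
  refine ⟨l', hl'l, fun h => ?_, fun R _ hidem v hv0 hv1 => ?_⟩
  · rw [h, hTcard] at hl'len
    omega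
  · rw [hl'prod, ← Fin.prod_univ_fun_getElem]
    exact prod_eq_prod_of_forall_exists_count_eq hidem hp hdvd hv0 hv1
      (fun i => hs₀ _ (List.getElem_mem _)) (by rw [card_compl, hTcard, Fintype.card_fin]; omega) hT

/-- over bounded variables `B` (axiom `s^{b s} = 0`) and periodic
variables `P` (axiom `s^{p s} = 1`), if the period of `s₀ ∈ P` divides all
periods, then every product of linear terms `s₀ + Σ_{s∈W} s` (with
`∅ ≠ W ⊆ (B ∪ P) \ {s₀}`) of length exceeding `Σ_B (b s − 1) + Σ_P (p s − 1)`
has a strict subproduct with the same normal form (i.e. equal value in every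
model). -/
theorem s0_anchored_cutoff_dvd
    {B P : Type*} [Fintype B] [Fintype P]
    (b : B → ℕ) (p : P → ℕ) (hb : ∀ s, 2 ≤ b s) (hp : ∀ s, 1 ≤ p s)
    (s₀ : P) (hdvd : ∀ s, p s₀ ∣ p s)
    (l : List (Finset (B ⊕ P))) (hne : ∀ W ∈ l, W.Nonempty)
    (hs₀ : ∀ W ∈ l, Sum.inr s₀ ∉ W)
    (hlen : (∑ s : B, (b s - 1)) + ∑ s : P, (p s - 1) < l.length) :
    ∃ l' : List (Finset (B ⊕ P)), l'.Sublist l ∧ l' ≠ l ∧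
      ∀ (R : Type) [CommSemiring R], (∀ a : R, a + a = a) →
        ∀ v : B ⊕ P → R, (∀ s : B, v (Sum.inl s) ^ b s = 0) →
          (∀ s : P, v (Sum.inr s) ^ p s = 1) →
          (l'.map fun W => v (Sum.inr s₀) + ∑ x ∈ W, v x).prod =
            (l.map fun W => v (Sum.inr s₀) + ∑ x ∈ W, v x).prod :=
  s0_anchored_cutoff_dvd_general b p hp s₀ hdvd l hs₀ hlen
end

section
/- Let s₀ be an arbitrary periodic variable. Every product t of linear terms each containing s₀, of length exceeding Σ_{bounded s}(b(s)−1) + Σ_{periodic s}(lcm(p(s), p(s₀)) − 1), admits a strict subproduct t' with nf(t') = nf(t). -/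
/-!
Both products are expanded in the idempotent semiring: a product of factors `s₀ + ∑ x ∈ W i, x`
is the sum of the monomials `∏ i, g i` over the placements `g i ∈ insert s₀ (W i)`. Put
`cap s = b s` for bounded and `cap s = lcm (p s) (p s₀)` for periodic `s`, so that `s ^ cap s` is
`0`, or `1 = s₀ ^ cap s`. Every monomial is then `0` or the monomial of a reduced placement, in
which each `s ≠ s₀` occurs fewer than `cap s` times. Choose a reduced placement `h` with the fewest
`s₀`-slots; by the length bound `h` has a set `D` of `p s₀` such slots. As for maximum matchings,
an augmenting-path argument rearranges every reduced placement, keeping its multiset of values,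
into one that puts `s₀` on all of `D`. Its monomial occurs in the expansion of
`s₀ ^ p s₀ * ∏ i ∉ D, (…) = ∏ i ∉ D, (…)`, and idempotency absorbs all the other terms.
-/

open Finset Function

namespace AnchoredCutoff

section Idempotent

variable {ι M : Type*} [AddCommMonoid M]

lemma sum_add_eq_right_of_forall {s : Finset ι} {f : ι → M} {a : M}
    (h : ∀ i ∈ s, f i + a = a) : (∑ i ∈ s, f i) + a = a := by
  induction s using Finset.cons_induction with
  | empty => simp
  | cons i s hi ih =>
    rw [sum_cons, add_assoc, ih fun j hj => h j (mem_cons_of_mem hj), h i (mem_cons_self i s)]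

lemma sum_eq_sum_of_subset_of_idempotent (hidem : ∀ a : M, a + a = a) {s t : Finset ι}
    (hst : s ⊆ t) (f : ι → M) (h : ∀ i ∈ t, f i = 0 ∨ ∃ j ∈ s, f j = f i) :
    ∑ i ∈ t, f i = ∑ i ∈ s, f i := by
  classical
  have absorb : ∀ {u : Finset ι} {i}, i ∈ u → f i + ∑ j ∈ u, f j = ∑ j ∈ u, f j :=
    fun hi => by rw [← add_sum_erase _ _ hi, ← add_assoc, hidem]
  calc ∑ i ∈ t, f i = (∑ i ∈ s, f i) + ∑ i ∈ t, f i :=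
        (sum_add_eq_right_of_forall fun i hi => absorb (hst hi)).symm
    _ = ∑ i ∈ s, f i := by
      rw [add_comm]
      refine sum_add_eq_right_of_forall fun i hi => ?_
      obtain h0 | ⟨j, hj, hji⟩ := h i hi
      · rw [h0, zero_add]
      · exact hji ▸ absorb hj

end Idempotent

section Content

variable {ι X : Type*} [Fintype ι]

def content (g : ι → X) : Multiset X := univ.val.map g

lemma count_content [DecidableEq X] (g : ι → X) (y : X) :
    (content g).count y = #{i | g i = y} := by
  simp [content, Multiset.count_map, eq_comm, Finset.card, Finset.filter_val]

lemma card_content (g : ι → X) : Multiset.card (content g) = Fintype.card ι := by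
  simp [content, Finset.card_univ]

lemma prod_map_content {R : Type*} [CommMonoid R] (v : X → R) (g : ι → X) :
    ((content g).map v).prod = ∏ i, v (g i) := by
  rw [content, Multiset.map_map]; rfl

lemma prod_eq_pow_mul_prod_compl [DecidableEq ι] {R : Type*} [CommMonoid R] (v : X → R)
    {g : ι → X} {S : Finset ι} {y : X} (hS : ∀ i ∈ S, g i = y) :
    ∏ i, v (g i) = v y ^ #S * ∏ i ∈ Sᶜ, v (g i) := by
  rw [← prod_mul_prod_compl S, prod_congr rfl fun i hi => congrArg v (hS i hi), prod_const]

lemma content_update_add_singleton [DecidableEq ι] (g : ι → X) (j : ι) (x : X) :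
    content (update g j x) + {g j} = content g + {x} := by
  have split : ∀ f : ι → X, content f = f j ::ₘ (univ.val.erase j).map f := fun f => by
    rw [content, ← Multiset.map_cons, Multiset.cons_erase (mem_univ_val j)]
  have off_j : (univ.val.erase j).map (update g j x) = (univ.val.erase j).map g :=
    Multiset.map_congr rfl fun i hi =>
      update_of_ne ((univ.nodup.mem_erase_iff).1 hi).1 _ _
  rw [split, split g, off_j, update_self, ← Multiset.singleton_add, ← Multiset.singleton_add]
  abel

lemma exists_apply_eq_ne_of_count_lt [DecidableEq X] {g h : ι → X} {y : X}
    (hlt : (content g).count y < (content h).count y) : ∃ j, h j = y ∧ g j ≠ y := by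
  by_contra! hsub
  rw [count_content, count_content] at hlt
  exact (card_le_card fun i hi => by simp_all).not_gt hlt

lemma card_filter_lt_card_filter {p q : ι → Prop} [DecidablePred p] [DecidablePred q]
    (hpq : ∀ i, p i → q i) {j : ι} (hq : q j) (hp : ¬p j) : #{i | p i} < #{i | q i} :=
  card_lt_card <| (ssubset_iff_of_subset (monotone_filter_right _ fun i _ => hpq i)).2
    ⟨j, by simpa, by simpa⟩

end Content

section Placements

variable {ι X : Type*} [Fintype ι] [DecidableEq ι] [DecidableEq X]
  (s0 : X) (cap : X → ℕ) (W : ι → Finset X)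

def placements : Finset (ι → X) := Fintype.piFinset fun i => insert s0 (W i)

def IsReduced (M : Multiset X) : Prop := ∀ y ≠ s0, M.count y < cap y

def IsMaxReduced (h : ι → X) : Prop :=
  h ∈ placements s0 W ∧ IsReduced s0 cap (content h) ∧
    ∀ k ∈ placements s0 W, IsReduced s0 cap (content k) →
      (content h).count s0 ≤ (content k).count s0

variable {s0 cap W}

lemma mem_placements {g : ι → X} : g ∈ placements s0 W ↔ ∀ i, g i ∈ insert s0 (W i) :=
  Fintype.mem_piFinset

lemma update_mem_placements {g : ι → X} (hg : g ∈ placements s0 W) {j : ι} {x : X}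
    (hx : x ∈ insert s0 (W j)) : update g j x ∈ placements s0 W := by
  rw [mem_placements] at hg ⊢
  intro i
  rcases eq_or_ne i j with rfl | hij
  · rwa [update_self]
  · rw [update_of_ne hij]; exact hg i

lemma isReduced_add_singleton_self {M : Multiset X} :
    IsReduced s0 cap (M + {s0}) ↔ IsReduced s0 cap M := by
  refine forall₂_congr fun y hy => ?_
  rw [Multiset.count_add, Multiset.count_singleton, if_neg hy, add_zero]

lemma exists_isMaxReduced (hcap : ∀ y ≠ s0, 0 < cap y) : ∃ h, IsMaxReduced s0 cap W h := by
  classical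
  have hconst : (fun _ => s0) ∈ {k ∈ placements s0 W | IsReduced s0 cap (content k)} := by
    refine mem_filter.2 ⟨mem_placements.2 fun i => mem_insert_self _ _, fun y hy => ?_⟩
    simpa [count_content, Ne.symm hy] using hcap y hy
  obtain ⟨h, hh, hmin⟩ := exists_min_image _ (fun k => (content k).count s0) ⟨_, hconst⟩
  rw [mem_filter] at hh
  exact ⟨h, hh.1, hh.2, fun k hk hred => hmin k (mem_filter.2 ⟨hk, hred⟩)⟩

lemma le_count_of_isReduced [Fintype X] {M : Multiset X} (hM : IsReduced s0 cap M) {k : ℕ}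
    (hk : ∑ y ∈ univ.erase s0, (cap y - 1) + k ≤ Multiset.card M) : k ≤ M.count s0 := by
  have hsum : M.count s0 + ∑ y ∈ univ.erase s0, M.count y = Multiset.card M := by
    rw [add_sum_erase _ (fun y => M.count y) (mem_univ s0),
      Multiset.sum_count_eq_card fun _ _ => mem_univ _]
  have hle : ∑ y ∈ univ.erase s0, M.count y ≤ ∑ y ∈ univ.erase s0, (cap y - 1) :=
    sum_le_sum fun y hy => by have := hM y (ne_of_mem_erase hy); omega
  omega

end Placements

section Exchange

variable {ι X : Type*} [Fintype ι] [DecidableEq ι] [DecidableEq X]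
  {s0 : X} {cap : X → ℕ} {W : ι → Finset X} {h : ι → X}

/-- `hh` witnesses that one more copy of `x` fits into `h`. Along an augmenting path, `x` goes into
a slot `j` with `h j = x ≠ g j`, and the displaced value `g j` is re-placed in the same way. -/
theorem exists_augment (hmax : IsMaxReduced s0 cap W h) {g hh : ι → X} {x : X}
    (hg : g ∈ placements s0 W) (hred : IsReduced s0 cap (content g + {x}))
    (hhh : hh ∈ placements s0 W) (hcontent : content hh + {s0} = content h + {x})
    (hagree : ∀ i, h i ≠ s0 → g i ≠ h i → hh i = h i) :
    ∃ g' ∈ placements s0 W, content g' + {s0} = content g + {x} ∧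
      ∀ i, h i = s0 → g' i = g i := by
  by_cases hx : x = s0
  · exact ⟨g, hg, by rw [hx], fun _ _ => rfl⟩
  have hcount : ∀ y, (content hh).count y + (if y = s0 then 1 else 0) =
      (content h).count y + (if y = x then 1 else 0) := fun y => by
    simpa [Multiset.count_singleton] using congrArg (Multiset.count y) hcontent
  -- by maximality of `h`, `hh` is not reduced, so `x` is saturated in `h`
  have hsat : cap x ≤ (content h).count x + 1 := by
    by_contra! hlt
    have hred_hh : IsReduced s0 cap (content hh) := fun y hy => by
      have hy' := hcount y
      rw [if_neg hy] at hy'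
      split_ifs at hy' with hyx
      · subst hyx; omega
      · have := hmax.2.1 y hy; omega
    have := hmax.2.2 hh hhh hred_hh
    have := hcount s0
    simp only [if_pos, Ne.symm hx, if_false] at this
    omega
  obtain ⟨j, hhj, hgj⟩ : ∃ j, h j = x ∧ g j ≠ x := exists_apply_eq_ne_of_count_lt <| by
    have := hred x hx
    rw [Multiset.count_add, Multiset.count_singleton_self] at this
    omega
  have hhj₀ : h j ≠ s0 := hhj ▸ hx
  have hhhj : hh j = x := hhj ▸ hagree j hhj₀ (hhj ▸ hgj)
  have hdecr : #{i | h i ≠ s0 ∧ update g j x i ≠ h i} < #{i | h i ≠ s0 ∧ g i ≠ h i} := by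
    refine card_filter_lt_card_filter (fun i ⟨hi, hne⟩ => ⟨hi, ?_⟩) ⟨hhj₀, hhj ▸ hgj⟩
      (by simp [hhj])
    rcases eq_or_ne i j with rfl | hij
    · simp [hhj] at hne
    · rwa [update_of_ne hij] at hne
  obtain ⟨g', hg', hcontent', hfix⟩ := exists_augment hmax (x := g j)
    (update_mem_placements hg (hhj ▸ mem_placements.1 hmax.1 j))
    (by rwa [content_update_add_singleton])
    (update_mem_placements hhh (mem_placements.1 hg j))
    (add_right_cancel (b := {x}) <| by
      rw [add_right_comm, ← hhhj, content_update_add_singleton, add_right_comm, hhhj, hcontent,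
        add_right_comm])
    (fun i hi hne => by
      have hij : i ≠ j := by rintro rfl; simp [hhj] at hne
      rw [update_of_ne hij] at hne ⊢
      exact hagree i hi hne)
  refine ⟨g', hg', by rw [hcontent', content_update_add_singleton], fun i hi => ?_⟩
  rw [hfix i hi, update_of_ne (by rintro rfl; exact hhj₀ hi)]
termination_by #{i | h i ≠ s0 ∧ g i ≠ h i}

theorem exists_content_eq_of_isMaxReduced (hmax : IsMaxReduced s0 cap W h) {g : ι → X}
    (hg : g ∈ placements s0 W) (hred : IsReduced s0 cap (content g)) :
    ∃ g' ∈ placements s0 W, content g' = content g ∧ ∀ i, h i = s0 → g' i = s0 := by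
  by_cases hfree : ∀ i, h i = s0 → g i = s0
  · exact ⟨g, hg, rfl, hfree⟩
  simp only [not_forall] at hfree
  obtain ⟨i₀, hhi₀, hgi₀⟩ := hfree
  -- empty the slot `i₀`, which is free in `h`, and re-place `g i₀` inside the support of `h`
  obtain ⟨g₁, hg₁, hcontent₁, hfix₁⟩ := exists_augment hmax (x := g i₀)
    (hh := update h i₀ (g i₀))
    (update_mem_placements hg (mem_insert_self _ _))
    (by rwa [content_update_add_singleton, isReduced_add_singleton_self])
    (update_mem_placements hmax.1 (mem_placements.1 hg i₀))
    (by rw [← hhi₀, content_update_add_singleton])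
    (fun i hi _ => update_of_ne (by rintro rfl; exact hi hhi₀) _ _)
  have hcontent : content g₁ = content g :=
    add_right_cancel (hcontent₁.trans (content_update_add_singleton g i₀ s0))
  have hdecr : #{i | h i = s0 ∧ g₁ i ≠ s0} < #{i | h i = s0 ∧ g i ≠ s0} := by
    refine card_filter_lt_card_filter (fun i ⟨hi, hne⟩ => ⟨hi, ?_⟩) ⟨hhi₀, hgi₀⟩
      (by simp [hfix₁ i₀ hhi₀])
    rcases eq_or_ne i i₀ with rfl | hii₀
    · simp [hfix₁ i hi] at hne
    · rwa [hfix₁ i hi, update_of_ne hii₀] at hne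
  obtain ⟨g', hg', hcontent', hfix'⟩ :=
    exists_content_eq_of_isMaxReduced hmax hg₁ (hcontent ▸ hred)
  exact ⟨g', hg', hcontent'.trans hcontent, hfix'⟩
termination_by #{i | h i = s0 ∧ g i ≠ s0}

end Exchange

section Reduction

variable {ι X R : Type*} [Fintype ι] [DecidableEq ι] [DecidableEq X] [CommMonoidWithZero R]
  {s0 : X} {cap : X → ℕ} {W : ι → Finset X}

-- `cap y` occurrences of `y` are either killed (`v y ^ cap y = 0`) or traded for `s0`.
theorem exists_isReduced_of_mem_placements (hcap : ∀ y ≠ s0, 0 < cap y) (v : X → R)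
    (hv : ∀ y ≠ s0, v y ^ cap y = 0 ∨ v y ^ cap y = 1 ∧ v s0 ^ cap y = 1)
    {g : ι → X} (hg : g ∈ placements s0 W) :
    ∏ i, v (g i) = 0 ∨
      ∃ g' ∈ placements s0 W, IsReduced s0 cap (content g') ∧ ∏ i, v (g' i) = ∏ i, v (g i) := by
  by_cases hred : IsReduced s0 cap (content g)
  · exact .inr ⟨g, hg, hred, rfl⟩
  obtain ⟨y, hy, hle⟩ : ∃ y ≠ s0, cap y ≤ #{i | g i = y} := by
    simpa [IsReduced, count_content] using hred
  obtain ⟨S, hSg, hS⟩ := exists_subset_card_eq hle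
  have hSy : ∀ i ∈ S, g i = y := fun i hi => (mem_filter.1 (hSg hi)).2
  have hsplit := prod_eq_pow_mul_prod_compl v hSy
  rw [hS] at hsplit
  obtain hzero | ⟨hone, hone₀⟩ := hv y hy
  · exact .inl (by rw [hsplit, hzero, zero_mul])
  set g₂ := S.piecewise (fun _ => s0) g
  have hg₂ : g₂ ∈ placements s0 W := mem_placements.2 fun i => by
    by_cases hi : i ∈ S
    · simp [g₂, hi]
    · simpa [g₂, hi] using mem_placements.1 hg i
  have hprod : ∏ i, v (g₂ i) = ∏ i, v (g i) := by
    rw [prod_eq_pow_mul_prod_compl v fun i hi => S.piecewise_eq_of_mem _ _ hi, hS, hone₀, hsplit,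
      hone, prod_congr rfl fun i hi => congrArg v (S.piecewise_eq_of_notMem _ _ (mem_compl.1 hi))]
  have hdecr : #{i | g₂ i ≠ s0} < #{i | g i ≠ s0} := by
    obtain ⟨i, hi⟩ := card_pos.1 (hS ▸ hcap y hy)
    refine card_filter_lt_card_filter (fun j hj => ?_) (hSy i hi ▸ hy) (by simp [g₂, hi])
    by_cases hjS : j ∈ S
    · simp [g₂, hjS] at hj
    · simpa [g₂, hjS] using hj
  obtain h0 | ⟨g', hg', hred', hprod'⟩ := exists_isReduced_of_mem_placements hcap v hv hg₂
  · exact .inl (hprod ▸ h0)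
  · exact .inr ⟨g', hg', hred', hprod'.trans hprod⟩
termination_by #{i | g i ≠ s0}

end Reduction

theorem exists_prod_eq_prod_compl {ι X : Type*} [Fintype ι] [DecidableEq ι] [Fintype X]
    [DecidableEq X] (s0 : X) (cap : X → ℕ) (hcap : ∀ y ≠ s0, 0 < cap y) (W : ι → Finset X)
    (hW : ∀ i, s0 ∉ W i) (hn : ∑ y ∈ univ.erase s0, (cap y - 1) + cap s0 ≤ Fintype.card ι) :
    ∃ D : Finset ι, #D = cap s0 ∧
      ∀ (R : Type*) [CommSemiring R], (∀ a : R, a + a = a) → ∀ v : X → R,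
        (∀ y ≠ s0, v y ^ cap y = 0 ∨ v y ^ cap y = 1 ∧ v s0 ^ cap y = 1) → v s0 ^ cap s0 = 1 →
        ∏ i, (v s0 + ∑ x ∈ W i, v x) = ∏ i ∈ Dᶜ, (v s0 + ∑ x ∈ W i, v x) := by
  obtain ⟨h, hmax⟩ := exists_isMaxReduced (W := W) hcap
  have hfree : cap s0 ≤ #{i | h i = s0} := by
    rw [← count_content]
    exact le_count_of_isReduced hmax.2.1 (by rwa [card_content])
  obtain ⟨D, hDh, hD⟩ := exists_subset_card_eq hfree
  refine ⟨D, hD, fun R _ hidem v hv hv₀ => ?_⟩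
  let t' : ι → Finset X := fun i => if i ∈ D then {s0} else insert s0 (W i)
  have hfull : ∏ i, (v s0 + ∑ x ∈ W i, v x) = ∑ g ∈ placements s0 W, ∏ i, v (g i) := by
    rw [placements, ← prod_univ_sum]
    exact prod_congr rfl fun i _ => (sum_insert (hW i)).symm
  -- the factors indexed by `D` are replaced by `s0`, which costs `v s0 ^ #D = 1`
  have hsub : ∏ i ∈ Dᶜ, (v s0 + ∑ x ∈ W i, v x) =
      ∑ g ∈ Fintype.piFinset t', ∏ i, v (g i) :=
    calc ∏ i ∈ Dᶜ, (v s0 + ∑ x ∈ W i, v x)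
        = v s0 ^ #D * ∏ i ∈ Dᶜ, (v s0 + ∑ x ∈ W i, v x) := by rw [hD, hv₀, one_mul]
      _ = ∏ i, ∑ x ∈ t' i, v x := by
        rw [← prod_mul_prod_compl D, ← prod_const]
        congr 1
        · exact prod_congr rfl fun i hi => by simp [t', hi]
        · exact prod_congr rfl fun i hi => by simp [t', mem_compl.1 hi, sum_insert (hW i)]
      _ = ∑ g ∈ Fintype.piFinset t', ∏ i, v (g i) := prod_univ_sum _ _
  have hsubset : Fintype.piFinset t' ⊆ placements s0 W := fun g hg =>
    mem_placements.2 fun i => by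
      have := Fintype.mem_piFinset.1 hg i
      by_cases hi : i ∈ D
      · simp_all [t']
      · simpa [t', hi] using this
  rw [hfull, hsub]
  refine sum_eq_sum_of_subset_of_idempotent hidem hsubset _ fun g hg => ?_
  obtain h0 | ⟨g₁, hg₁, hred₁, hprod₁⟩ := exists_isReduced_of_mem_placements hcap v hv hg
  · exact .inl h0
  obtain ⟨g', hg', hcontent', hfix'⟩ := exists_content_eq_of_isMaxReduced hmax hg₁ hred₁
  refine .inr ⟨g', Fintype.mem_piFinset.2 fun i => ?_, ?_⟩
  · by_cases hi : i ∈ D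
    · simp [t', hi, hfix' i (mem_filter.1 (hDh hi)).2]
    · simpa [t', hi] using mem_placements.1 hg' i
  · rw [← prod_map_content, hcontent', prod_map_content, hprod₁]

lemma pow_eq_one_of_dvd {M : Type*} [Monoid M] {x : M} {a c : ℕ} (hx : x ^ a = 1) (hac : a ∣ c) :
    x ^ c = 1 := by
  obtain ⟨k, rfl⟩ := hac
  rw [pow_mul, hx, one_pow]

lemma exists_sublist_prod_map_eq_prod_compl {α : Type*} (l : List α) {D : Finset (Fin l.length)}
    (hD : D.Nonempty) :
    ∃ l' : List α, l'.Sublist l ∧ l' ≠ l ∧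
      ∀ (M : Type*) [CommMonoid M] (f : α → M), (l'.map f).prod = ∏ i ∈ Dᶜ, f (l.get i) := by
  refine ⟨((List.finRange l.length).filter (· ∉ D)).map l.get, ?_, ?_, fun M _ f => ?_⟩
  · conv_rhs => rw [← List.map_get_finRange l]
    exact List.filter_sublist.map _
  · intro heq
    obtain ⟨i, hi⟩ := hD
    have hlen := congrArg List.length heq
    rw [List.length_map] at hlen
    exact (List.length_filter_lt_length_iff_exists.2
      ⟨i, List.mem_finRange i, by simpa using hi⟩).ne (hlen.trans List.length_finRange.symm)
  · have hcompl : Dᶜ = univ.filter (· ∉ D) := by ext; simp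
    rw [hcompl, prod_eq_multiset_prod, filter_val, Fin.univ_def]
    simp [List.map_map, comp_def]

end AnchoredCutoff

open AnchoredCutoff in
theorem s0_anchored_cutoff_general
    {B P : Type*} [Fintype B] [Fintype P]
    (b : B → ℕ) (p : P → ℕ) (hb : ∀ s, 2 ≤ b s) (hp : ∀ s, 1 ≤ p s)
    (s₀ : P)
    (l : List (Finset (B ⊕ P)))
    (hs₀ : ∀ W ∈ l, Sum.inr s₀ ∉ W)
    (hlen : (∑ s : B, (b s - 1)) + ∑ s : P, (Nat.lcm (p s) (p s₀) - 1) < l.length) :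
    ∃ l' : List (Finset (B ⊕ P)), l'.Sublist l ∧ l' ≠ l ∧
      ∀ (R : Type) [CommSemiring R], (∀ a : R, a + a = a) →
        ∀ v : B ⊕ P → R, (∀ s : B, v (Sum.inl s) ^ b s = 0) →
          (∀ s : P, v (Sum.inr s) ^ p s = 1) →
          (l'.map fun W => v (Sum.inr s₀) + ∑ x ∈ W, v x).prod =
            (l.map fun W => v (Sum.inr s₀) + ∑ x ∈ W, v x).prod := by
  classical
  let cap : B ⊕ P → ℕ := Sum.elim b fun s => (p s).lcm (p s₀)
  have hcap : ∀ y, 0 < cap y := by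
    rintro (s | s)
    exacts [by have := hb s; simp [cap]; omega, Nat.lcm_pos (hp s) (hp s₀)]
  have hcap₀ : cap (.inr s₀) = p s₀ := Nat.lcm_self _
  have hn : ∑ y ∈ univ.erase (.inr s₀), (cap y - 1) + cap (.inr s₀) ≤
      Fintype.card (Fin l.length) := by
    have hsplit := add_sum_erase _ (fun y => cap y - 1) (mem_univ (Sum.inr s₀))
    have htotal : ∑ y, (cap y - 1) =
        ∑ s : B, (b s - 1) + ∑ s : P, ((p s).lcm (p s₀) - 1) := Fintype.sum_sum_type _
    have := hcap (.inr s₀)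
    rw [Fintype.card_fin]
    omega
  obtain ⟨D, hD, hprod⟩ := exists_prod_eq_prod_compl (.inr s₀) cap (fun y _ => hcap y)
    (fun i => l.get i) (fun i => hs₀ _ (l.get_mem i)) hn
  obtain ⟨l', hsub, hne, hl'⟩ :=
    exists_sublist_prod_map_eq_prod_compl l (D := D) (card_pos.1 (hD ▸ hcap _))
  refine ⟨l', hsub, hne, fun R _ hidem v hvb hvp => ?_⟩
  have hv : ∀ y ≠ .inr s₀, v y ^ cap y = 0 ∨ v y ^ cap y = 1 ∧ v (.inr s₀) ^ cap y = 1 := by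
    rintro (s | s) _
    · exact .inl (hvb s)
    · exact .inr ⟨pow_eq_one_of_dvd (hvp s) (Nat.dvd_lcm_left _ _),
        pow_eq_one_of_dvd (hvp s₀) (Nat.dvd_lcm_right _ _)⟩
  rw [hl', ← Fin.prod_univ_fun_getElem]
  exact (hprod R hidem v hv (hcap₀ ▸ hvp s₀)).symm

/-- over bounded variables `B` (axiom `s^{b s} = 0`) and periodic
variables `P` (axiom `s^{p s} = 1`), for an arbitrary periodic variable `s₀`,
every product of linear terms `s₀ + Σ_{s∈W} s` (with
`∅ ≠ W ⊆ (B ∪ P) \ {s₀}`) of length exceeding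
`Σ_B (b s − 1) + Σ_P (lcm (p s) (p s₀) − 1)` has a strict subproduct with the
same normal form (i.e. equal value in every model). -/
theorem s0_anchored_cutoff
    {B P : Type*} [Fintype B] [Fintype P]
    (b : B → ℕ) (p : P → ℕ) (hb : ∀ s, 2 ≤ b s) (hp : ∀ s, 1 ≤ p s)
    (s₀ : P)
    (l : List (Finset (B ⊕ P))) (hne : ∀ W ∈ l, W.Nonempty)
    (hs₀ : ∀ W ∈ l, Sum.inr s₀ ∉ W)
    (hlen : (∑ s : B, (b s - 1)) + ∑ s : P, (Nat.lcm (p s) (p s₀) - 1) < l.length) :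
    ∃ l' : List (Finset (B ⊕ P)), l'.Sublist l ∧ l' ≠ l ∧
      ∀ (R : Type) [CommSemiring R], (∀ a : R, a + a = a) →
        ∀ v : B ⊕ P → R, (∀ s : B, v (Sum.inl s) ^ b s = 0) →
          (∀ s : P, v (Sum.inr s) ^ p s = 1) →
          (l'.map fun W => v (Sum.inr s₀) + ∑ x ∈ W, v x).prod =
            (l.map fun W => v (Sum.inr s₀) + ∑ x ∈ W, v x).prod :=
  s0_anchored_cutoff_general b p hb hp s₀ l hs₀ hlen
end

section
/- General cut-off lemma: with periodic variables P = {s₁,…,s_n} and bounded variables B, define b(B,P) = |B|₁·(|P|+1) + Σ_{1≤i≤j≤n} lcm(p(s_j), p(s_i)) − |P|(|P|+1)/2, where |B|₁ = Σ_{s∈B}(b(s)−1). Then every product t of linear terms over B ∪ P with length exceeding b(B,P) satisfies: either nf(t) = 0, or there exists a strict subproduct t' ≺ t with nf(t') = nf(t). -/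
/-!
In an idempotent semiring the product expands into the sum of its monomials, one for each choice
of a variable in every factor, so its value depends only on its normal form: the exponent vectors
of the monomials that survive `s ^ b s = 0`, periodic exponents reduced modulo their periods.
Classify the factors by the least periodic variable they contain. More than `|B|₁` factors without
periodic variables kill every monomial. Otherwise, by pigeonhole, the class anchored at some `sᵢ`
is long. Trading `lcm (p j) (p i)` picks of a later `sⱼ` in that class for as many picks of `sᵢ`
keeps the monomial, which caps the picks of every variable other than `sᵢ` there. A choice with the
fewest picks of `sᵢ` therefore still picks `sᵢ` at `p i` positions, and an alternating-path
exchange realises every surviving monomial by a choice picking `sᵢ` at those positions too; as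
`sᵢ ^ p i = 1`, deleting these `p i` factors leaves the normal form unchanged.
-/

open Finset

section IdempotentSum

variable {α β M : Type*} [AddCommMonoid M]

theorem sum_const_of_idempotent (hid : ∀ a : M, a + a = a) {s : Finset α} (hs : s.Nonempty)
    (a : M) : ∑ _x ∈ s, a = a := by
  induction hs using Finset.Nonempty.cons_induction with
  | singleton x => simp
  | cons x s hx hs ih => rw [sum_cons, ih, hid]

theorem sum_image_of_idempotent [DecidableEq β] (hid : ∀ a : M, a + a = a) (s : Finset α)
    (f : α → β) (g : β → M) : ∑ y ∈ s.image f, g y = ∑ x ∈ s, g (f x) := by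
  rw [← sum_fiberwise_of_maps_to (fun x hx => mem_image_of_mem f hx)]
  refine sum_congr rfl fun y hy => ?_
  obtain ⟨x, hx, rfl⟩ := mem_image.1 hy
  rw [sum_congr rfl fun i hi => by rw [(mem_filter.1 hi).2]]
  exact (sum_const_of_idempotent hid (s := {i ∈ s | f i = f x}) ⟨x, by simp [hx]⟩ _).symm

theorem prod_sum_eq_sum_piFinset_of_idempotent {ι V R : Type*} [Fintype ι] [DecidableEq ι]
    [CommSemiring R] (hid : ∀ a : R, a + a = a) {W : ι → Finset V} (hW : ∀ k, (W k).Nonempty)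
    (f : V → R) (G : Finset ι) :
    ∏ k ∈ G, ∑ x ∈ W k, f x = ∑ c ∈ Fintype.piFinset W, ∏ k ∈ G, f (c k) := by
  have hfactor : ∀ k, ∑ x ∈ W k, (if k ∈ G then f x else 1) =
      if k ∈ G then ∑ x ∈ W k, f x else 1 := by
    intro k
    split_ifs
    · rfl
    · exact sum_const_of_idempotent hid (hW k) 1
  calc ∏ k ∈ G, ∑ x ∈ W k, f x
      = ∏ k, ∑ x ∈ W k, (if k ∈ G then f x else 1) := by
        simp only [hfactor, prod_ite_mem, univ_inter]
    _ = ∑ c ∈ Fintype.piFinset W, ∏ k ∈ G, f (c k) := by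
        simp only [prod_univ_sum, prod_ite_mem, univ_inter]

end IdempotentSum

section SublistAt

variable {α : Type*}

def sublistAt (l : List α) (K : Finset (Fin l.length)) : List α :=
  ((List.finRange l.length).filter (· ∈ K)).map fun k => l[k.1]

theorem toFinset_filter_finRange {m : ℕ} (K : Finset (Fin m)) :
    ((List.finRange m).filter (· ∈ K)).toFinset = K := by
  ext
  simp

theorem sublistAt_sublist (l : List α) (K : Finset (Fin l.length)) : (sublistAt l K).Sublist l := by
  conv_rhs => rw [← List.map_getElem_finRange l]
  exact List.filter_sublist.map _

theorem length_sublistAt (l : List α) (K : Finset (Fin l.length)) :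
    (sublistAt l K).length = #K := by
  rw [sublistAt, List.length_map, ← List.toFinset_card_of_nodup ((List.nodup_finRange _).filter _),
    toFinset_filter_finRange]

theorem prod_map_sublistAt {M : Type*} [CommMonoid M] (l : List α) (K : Finset (Fin l.length))
    (f : α → M) : ((sublistAt l K).map f).prod = ∏ k ∈ K, f l[k.1] := by
  rw [sublistAt, List.map_map, ← List.prod_toFinset _ ((List.nodup_finRange _).filter _),
    toFinset_filter_finRange]
  rfl

end SublistAt

section Picks

variable {ι V : Type*} {c c' : ι → V} {G G' S : Finset ι}

def picks (c : ι → V) (G : Finset ι) : Multiset V := G.val.map c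

theorem card_picks : Multiset.card (picks c G) = #G := Multiset.card_map _ _

theorem mem_picks {z : V} : z ∈ picks c G ↔ ∃ k ∈ G, c k = z := by simp [picks]

theorem picks_congr (h : ∀ k ∈ G, c k = c' k) : picks c G = picks c' G :=
  Multiset.map_congr rfl h

theorem picks_mono (h : G ⊆ G') : picks c G ≤ picks c G' :=
  Multiset.map_le_map (val_le_iff.2 h)

theorem picks_eq_replicate {a : V} (h : ∀ k ∈ G, c k = a) : picks c G = .replicate #G a :=
  Multiset.eq_replicate.2 ⟨card_picks, fun z hz => by
    obtain ⟨k, hk, rfl⟩ := mem_picks.1 hz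
    exact h k hk⟩

theorem count_picks [DecidableEq V] (z : V) : (picks c G).count z = #{k ∈ G | c k = z} := by
  simp [picks, Multiset.count_map, card_def, filter_val, eq_comm]

theorem exists_eq_ne_of_count_picks_lt [DecidableEq V] {z : V}
    (h : (picks c' G).count z < (picks c G).count z) : ∃ k ∈ G, c k = z ∧ c' k ≠ z := by
  by_contra! hne
  rw [count_picks, count_picks] at h
  exact h.not_ge (card_le_card fun k hk => by
    simp only [mem_filter] at hk ⊢
    exact ⟨hk.1, hne k hk.1 hk.2⟩)

variable [DecidableEq ι]

theorem picks_insert {k : ι} (hk : k ∉ G) : picks c (insert k G) = c k ::ₘ picks c G := by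
  simp [picks, insert_val_of_notMem hk]

theorem picks_sdiff_add (h : S ⊆ G) : picks c (G \ S) + picks c S = picks c G := by
  conv_rhs => rw [← sdiff_union_of_subset h, ← disjUnion_eq_union _ _ sdiff_disjoint]
  rw [picks, picks, picks, ← Multiset.map_add]
  rfl

theorem picks_piecewise {f g : ι → V} (h : S ⊆ G) :
    picks (S.piecewise f g) G = picks f S + picks g (G \ S) := by
  rw [← picks_sdiff_add h, add_comm, picks_congr fun k hk => S.piecewise_eq_of_mem f g hk,
    picks_congr fun k hk => S.piecewise_eq_of_notMem f g (mem_sdiff.1 hk).2]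

theorem picks_piecewise_const_add {a b : V} (h : S ⊆ G) (hS : ∀ k ∈ S, c k = a) :
    picks (S.piecewise (fun _ => b) c) G + .replicate #S a = picks c G + .replicate #S b := by
  rw [picks_piecewise h, picks_eq_replicate fun _ _ => rfl, ← picks_sdiff_add h (c := c),
    picks_eq_replicate hS]
  abel

end Picks

section Rerouting

variable {ι V : Type*} [DecidableEq V]

def RespectsCap (s₀ : V) (cap : V → ℕ) (F : Finset ι) (c : ι → V) : Prop :=
  ∀ z ≠ s₀, (picks c F).count z ≤ cap z

variable [Fintype ι] [DecidableEq ι] {W : ι → Finset V} {F S : Finset ι} {s₀ z : V}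
  {cap : V → ℕ} {c cstar : ι → V}

def IsAnchorMinimal (W : ι → Finset V) (s₀ : V) (cap : V → ℕ) (F : Finset ι) (cstar : ι → V) :
    Prop :=
  cstar ∈ Fintype.piFinset W ∧ RespectsCap s₀ cap F cstar ∧
    ∀ c ∈ Fintype.piFinset W, RespectsCap s₀ cap F c →
      (picks cstar F).count s₀ ≤ (picks c F).count s₀

theorem IsAnchorMinimal.exists_extend (hmin : IsAnchorMinimal W s₀ cap F cstar)
    (hcW : c ∈ Fintype.piFinset W) (hc : RespectsCap s₀ cap F c) (hSF : S ⊆ F) (hz : z ≠ s₀)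
    (hS : picks cstar S + {z} = picks c S + {s₀}) : ∃ k ∈ F \ S, cstar k = z ∧ c k ≠ z := by
  obtain ⟨hcstarW, hcstar, hleast⟩ := hmin
  set c₂ := S.piecewise c cstar
  have hc₂W : c₂ ∈ Fintype.piFinset W := by
    rw [Fintype.mem_piFinset] at hcW hcstarW ⊢
    intro k
    by_cases hk : k ∈ S <;> simp [c₂, hk, hcW k, hcstarW k]
  have hc₂ : picks c₂ F + {s₀} = picks cstar F + {z} := by
    rw [picks_piecewise hSF, ← picks_sdiff_add hSF (c := cstar), add_right_comm, ← hS]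
    abel
  have hcount (y : V) : (picks c₂ F).count y + (if y = s₀ then 1 else 0) =
      (picks cstar F).count y + (if y = z then 1 else 0) := by
    simpa [Multiset.count_singleton] using congrArg (Multiset.count y) hc₂
  -- otherwise `c₂` would be an admissible choice with fewer picks of `s₀` than `cstar`
  have hfull : cap z ≤ (picks cstar F).count z := by
    by_contra! hlt
    have hc₂cap : RespectsCap s₀ cap F c₂ := fun y hy => by
      have h1 := hcount y
      have h2 := hcstar y hy
      split_ifs at h1 with h <;> subst_vars <;> omega
    have h1 := hleast c₂ hc₂W hc₂cap
    have h2 := hcount s₀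
    rw [if_pos rfl, if_neg hz.symm] at h2
    omega
  have hSz := congrArg (Multiset.count z) hS
  have hcz := congrArg (Multiset.count z) (picks_sdiff_add hSF (c := c))
  have hcsz := congrArg (Multiset.count z) (picks_sdiff_add hSF (c := cstar))
  simp only [Multiset.count_add, Multiset.count_singleton, if_true, hz, if_false] at hSz hcz hcsz
  have := hc z hz
  exact exists_eq_ne_of_count_picks_lt (by omega)

-- Swapping `c` and `cstar` on `S` trades one pick of `z` for one pick of `s₀`. Each extension
-- step moves this deficit to another value; once it is `s₀` itself, the swap preserves all counts.
theorem IsAnchorMinimal.exists_picks_eq (hmin : IsAnchorMinimal W s₀ cap F cstar)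
    (hcW : c ∈ Fintype.piFinset W) (hc : RespectsCap s₀ cap F c) (hSF : S ⊆ F)
    (hS : picks cstar S + {z} = picks c S + {s₀}) :
    ∃ T, S ⊆ T ∧ T ⊆ F ∧ picks cstar T = picks c T := by
  induction hm : #(F \ S) using Nat.strong_induction_on generalizing S z with
  | _ m ih =>
  by_cases hz : z = s₀
  · subst hz
    exact ⟨S, subset_rfl, hSF, add_right_cancel hS⟩
  obtain ⟨k, hk, hkz, -⟩ := hmin.exists_extend hcW hc hSF hz hS
  obtain ⟨hkF, hkS⟩ := mem_sdiff.1 hk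
  have hlt : #(F \ insert k S) < m := by
    rw [← hm, sdiff_insert]
    exact card_erase_lt_of_mem hk
  have hkS' : picks cstar (insert k S) + {c k} = picks c (insert k S) + {s₀} := by
    rw [picks_insert hkS, picks_insert hkS, hkz, ← Multiset.singleton_add,
      ← Multiset.singleton_add]
    calc {z} + picks cstar S + {c k} = picks cstar S + {z} + {c k} := by abel
      _ = {c k} + picks c S + {s₀} := by rw [hS]; abel
  obtain ⟨T, hST, hTF, hT⟩ := ih _ hlt (insert_subset hkF hSF) hkS' rfl
  exact ⟨T, (subset_insert k S).trans hST, hTF, hT⟩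

theorem IsAnchorMinimal.exists_rearrangement (hmin : IsAnchorMinimal W s₀ cap F cstar)
    (hcW : c ∈ Fintype.piFinset W) (hc : RespectsCap s₀ cap F c) :
    ∃ c' ∈ Fintype.piFinset W, picks c' F = picks c F ∧ (∀ k ∉ F, c' k = c k) ∧
      ∀ k ∈ F, cstar k = s₀ → c' k = s₀ := by
  set R := {c' ∈ Fintype.piFinset W | picks c' F = picks c F ∧ ∀ k ∉ F, c' k = c k}
  obtain ⟨c', hc'R, hc'min⟩ := exists_min_image R
    (fun c' => #{k ∈ F | cstar k = s₀ ∧ c' k ≠ s₀}) ⟨c, mem_filter.2 ⟨hcW, rfl, fun _ _ => rfl⟩⟩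
  obtain ⟨hc'W, hc'F, hc'off⟩ := mem_filter.1 hc'R
  refine ⟨c', hc'W, hc'F, hc'off, fun d hdF hd => ?_⟩
  by_contra hd'
  have hc'cap : RespectsCap s₀ cap F c' := by rwa [RespectsCap, hc'F]
  obtain ⟨T, hdT, hTF, hT⟩ := hmin.exists_picks_eq hc'W hc'cap (singleton_subset_iff.2 hdF)
    (z := c' d) (by simp [picks, hd, add_comm])
  set c'' := T.piecewise cstar c'
  have hc''R : c'' ∈ R := by
    refine mem_filter.2 ⟨?_, ?_, fun k hk => ?_⟩
    · rw [Fintype.mem_piFinset] at hc'W ⊢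
      intro k
      by_cases hk : k ∈ T <;> simp [c'', hk, hc'W k, Fintype.mem_piFinset.1 hmin.1 k]
    · rw [picks_piecewise hTF, hT, add_comm, picks_sdiff_add hTF, hc'F]
    · rw [← hc'off k hk]
      exact T.piecewise_eq_of_notMem _ _ fun hkT => hk (hTF hkT)
  have hlt : #{k ∈ F | cstar k = s₀ ∧ c'' k ≠ s₀} < #{k ∈ F | cstar k = s₀ ∧ c' k ≠ s₀} := by
    refine card_lt_card ((ssubset_iff_of_subset fun k hk => ?_).2 ⟨d, ?_, fun hd'' => ?_⟩)
    · simp only [mem_filter] at hk ⊢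
      have hkT : k ∉ T := fun hkT => hk.2.2 ((T.piecewise_eq_of_mem cstar c' hkT).trans hk.2.1)
      exact ⟨hk.1, hk.2.1, (T.piecewise_eq_of_notMem cstar c' hkT).symm.trans_ne hk.2.2⟩
    · exact mem_filter.2 ⟨hdF, hd, hd'⟩
    · exact (mem_filter.1 hd'').2.2
        ((T.piecewise_eq_of_mem cstar c' (hdT (mem_singleton_self d))).trans hd)
  exact (hc'min c'' hc''R).not_gt hlt

-- `D` consists of positions at which an anchor-minimal choice picks `s₀`; it picks `s₀` often
-- enough because its other picks are capped.
theorem exists_subset_forall_rearrangement [Fintype V] (hW : ∀ k, (W k).Nonempty)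
    (hs₀ : ∀ k ∈ F, s₀ ∈ W k) {P : ℕ} (hcard : ∑ z ∈ univ.erase s₀, cap z + P ≤ #F) :
    ∃ D ⊆ F, #D = P ∧ ∀ c ∈ Fintype.piFinset W, RespectsCap s₀ cap F c →
      ∃ c' ∈ Fintype.piFinset W, picks c' F = picks c F ∧ (∀ k ∉ F, c' k = c k) ∧
        ∀ k ∈ D, c' k = s₀ := by
  classical
  set A := {c ∈ Fintype.piFinset W | RespectsCap s₀ cap F c}
  have hA : A.Nonempty := by
    let c₀ : ι → V := F.piecewise (fun _ => s₀) fun k => (hW k).choose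
    refine ⟨c₀, mem_filter.2 ⟨?_, fun z hz => ?_⟩⟩
    · rw [Fintype.mem_piFinset]
      intro k
      by_cases hk : k ∈ F <;> simp [c₀, hk, hs₀, (hW k).choose_spec]
    · rw [picks_eq_replicate fun k hk => F.piecewise_eq_of_mem _ _ hk, Multiset.count_replicate,
        if_neg hz.symm]
      exact Nat.zero_le _
  obtain ⟨cstar, hcstarA, hleast⟩ := exists_min_image A (fun c => (picks c F).count s₀) hA
  obtain ⟨hcstarW, hcstar⟩ := mem_filter.1 hcstarA
  have hmin : IsAnchorMinimal W s₀ cap F cstar :=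
    ⟨hcstarW, hcstar, fun c hcW hc => hleast c (mem_filter.2 ⟨hcW, hc⟩)⟩
  have hP : P ≤ #{k ∈ F | cstar k = s₀} := by
    have htotal : ∑ z ∈ univ.erase s₀, (picks cstar F).count z + (picks cstar F).count s₀ = #F := by
      rw [sum_erase_add _ _ (mem_univ s₀), Multiset.sum_count_eq_card fun _ _ => mem_univ _,
        card_picks]
    have := sum_le_sum (s := univ.erase s₀) fun z hz => hcstar z (ne_of_mem_erase hz)
    rw [← count_picks]
    omega
  obtain ⟨D, hD, hDcard⟩ := exists_subset_card_eq hP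
  refine ⟨D, hD.trans (filter_subset _ _), hDcard, fun c hcW hc => ?_⟩
  obtain ⟨c', hc'W, hc'F, hc'off, hc's₀⟩ := hmin.exists_rearrangement hcW hc
  exact ⟨c', hc'W, hc'F, hc'off, fun k hk =>
    hc's₀ k (filter_subset _ _ (hD hk)) (mem_filter.1 (hD hk)).2⟩

end Rerouting

section NormalForm

variable {B : Type*} [DecidableEq B] {n : ℕ} {b : B → ℕ} {p : Fin n → ℕ}

def exponents (p : Fin n → ℕ) (m : Multiset (B ⊕ Fin n)) : (B → ℕ) × (Fin n → ℕ) :=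
  (fun s => m.count (.inl s), fun j => m.count (.inr j) % p j)

def evalMonomial [Fintype B] {R : Type*} [CommSemiring R] (v : B ⊕ Fin n → R)
    (μ : (B → ℕ) × (Fin n → ℕ)) : R :=
  (∏ s, v (.inl s) ^ μ.1 s) * ∏ j, v (.inr j) ^ μ.2 j

/-- The normal form `nf` of `∏ k ∈ G, ∑ x ∈ W k, x`: the reduced exponent vectors of its
nonvanishing monomials, one monomial `∏ k ∈ G, c k` for each choice `c ∈ piFinset W`. -/
def normalForm [Fintype B] {ι : Type*} [Fintype ι] [DecidableEq ι] (b : B → ℕ) (p : Fin n → ℕ)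
    (W : ι → Finset (B ⊕ Fin n)) (G : Finset ι) : Finset ((B → ℕ) × (Fin n → ℕ)) :=
  {μ ∈ (Fintype.piFinset W).image fun c => exponents p (picks c G) | ∀ s, μ.1 s < b s}

theorem exponents_add_replicate {m : Multiset (B ⊕ Fin n)} {j : Fin n} {L : ℕ} (h : p j ∣ L) :
    exponents p (m + .replicate L (.inr j)) = exponents p m := by
  obtain ⟨t, rfl⟩ := h
  refine Prod.ext (funext fun s => ?_) (funext fun j' => ?_)
  · simp [exponents, Multiset.count_replicate]
  · by_cases hj : j = j'
    · subst hj
      simp [exponents, Multiset.count_replicate, Nat.add_mul_mod_self_left]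
    · simp [exponents, Multiset.count_replicate, hj]

theorem prod_map_eq_ite [Fintype B] {R : Type*} [CommSemiring R] {v : B ⊕ Fin n → R}
    (hv0 : ∀ s, v (.inl s) ^ b s = 0) (hv1 : ∀ j, v (.inr j) ^ p j = 1)
    (m : Multiset (B ⊕ Fin n)) :
    (m.map v).prod =
      if ∀ s, (exponents p m).1 s < b s then evalMonomial v (exponents p m) else 0 := by
  rw [prod_multiset_map_count, prod_subset (subset_univ _) fun z _ hz => by
      rw [Multiset.count_eq_zero.2 (by simpa using hz), pow_zero],
    Fintype.prod_sum_type]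
  split_ifs with h
  · refine congrArg _ (prod_congr rfl fun j _ => ?_)
    conv_lhs => rw [← Nat.div_add_mod (m.count (.inr j)) (p j), pow_add, pow_mul, hv1, one_pow,
      one_mul]
    rfl
  · obtain ⟨s, hs⟩ := not_forall.1 h
    refine mul_eq_zero_of_left (prod_eq_zero (f := fun s => v (.inl s) ^ m.count (.inl s))
      (mem_univ s) (pow_eq_zero_of_le (not_lt.1 hs) (hv0 s))) _

theorem prod_sum_eq_sum_normalForm [Fintype B] {ι R : Type*} [Fintype ι] [DecidableEq ι]
    [CommSemiring R] (hid : ∀ a : R, a + a = a) {v : B ⊕ Fin n → R} (hv0 : ∀ s, v (.inl s) ^ b s = 0)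
    (hv1 : ∀ j, v (.inr j) ^ p j = 1) {W : ι → Finset (B ⊕ Fin n)} (hW : ∀ k, (W k).Nonempty)
    (G : Finset ι) :
    ∏ k ∈ G, ∑ x ∈ W k, v x = ∑ μ ∈ normalForm b p W G, evalMonomial v μ := by
  rw [prod_sum_eq_sum_piFinset_of_idempotent hid hW, normalForm, sum_filter,
    sum_image_of_idempotent hid]
  refine sum_congr rfl fun c _ => ?_
  rw [← prod_map_eq_ite hv0 hv1, picks, Multiset.map_map, prod_eq_multiset_prod]
  rfl

end NormalForm

section AnchorCap

variable {B : Type*} [DecidableEq B] {n : ℕ} {b : B → ℕ} {p : Fin n → ℕ}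

-- In the block of factors anchored at `inr i`, a surviving monomial picks `inl s` fewer than `b s`
-- times, no `inr j` with `j < i`, and after `exists_count_lt_lcm` fewer than `lcm (p j) (p i)`
-- times `inr j` with `i < j`.
def anchorCap (b : B → ℕ) (p : Fin n → ℕ) (i : Fin n) : B ⊕ Fin n → ℕ :=
  Sum.elim (fun s => b s - 1) fun j => if i < j then Nat.lcm (p j) (p i) - 1 else 0

theorem sum_anchorCap_add_le [Fintype B] (hp : ∀ j, 0 < p j) {i : Fin n} {N : ℕ}
    (hN : ∑ s, (b s - 1) + ∑ j ∈ Ici i, (Nat.lcm (p j) (p i) - 1) < N) :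
    ∑ z ∈ univ.erase (.inr i), anchorCap b p i z + p i ≤ N := by
  rw [sum_erase _ (by simp [anchorCap]), Fintype.sum_sum_type]
  simp only [anchorCap, Sum.elim_inl, Sum.elim_inr]
  rw [← sum_filter, filter_lt_eq_Ioi]
  rw [Ici_eq_cons_Ioi, sum_cons, Nat.lcm_self] at hN
  have := hp i
  omega

theorem respectsCap_anchorCap {ι : Type*} [Fintype ι] [DecidableEq ι] {W : ι → Finset (B ⊕ Fin n)}
    {F : Finset ι} {i : Fin n} (hlt : ∀ k ∈ F, ∀ j < i, .inr j ∉ W k)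
    {c : ι → B ⊕ Fin n} (hc : c ∈ Fintype.piFinset W)
    (hlive : ∀ s, (picks c univ).count (.inl s) < b s)
    (hlcm : ∀ j ≠ i, (picks c F).count (.inr j) < Nat.lcm (p j) (p i)) :
    RespectsCap (.inr i) (anchorCap b p i) F c := by
  rintro (s | j) hz
  · have := Multiset.count_le_of_le (.inl s) (picks_mono (c := c) (subset_univ F))
    have := hlive s
    simp only [anchorCap, Sum.elim_inl]
    omega
  obtain hji | rfl | hij := lt_trichotomy j i
  · rw [Multiset.count_eq_zero.2 fun hj => ?_]
    · exact Nat.zero_le _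
    obtain ⟨k, hk, hkj⟩ := mem_picks.1 hj
    exact hlt k hk j hji (hkj ▸ Fintype.mem_piFinset.1 hc k)
  · exact absurd rfl hz
  · have := hlcm j hij.ne'
    simp only [anchorCap, Sum.elim_inr, if_pos hij]
    omega

end AnchorCap

section Cutoff

variable {ι B : Type*} [Fintype ι] [DecidableEq ι] [Fintype B] [DecidableEq B] {n : ℕ}
  {b : B → ℕ} {p : Fin n → ℕ} {W : ι → Finset (B ⊕ Fin n)} {F : Finset ι}

theorem normalForm_eq_empty_of_card_lt (hF : ∀ k ∈ F, ∀ j, .inr j ∉ W k)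
    (hcard : ∑ s, (b s - 1) < #F) : normalForm b p W univ = ∅ := by
  rw [normalForm, filter_eq_empty_iff]
  rintro _ hμ hlive
  obtain ⟨c, hc, rfl⟩ := mem_image.1 hμ
  have hinr (j : Fin n) : (picks c F).count (.inr j) = 0 := Multiset.count_eq_zero.2 fun hj => by
    obtain ⟨k, hk, hkj⟩ := mem_picks.1 hj
    exact hF k hk j (hkj ▸ Fintype.mem_piFinset.1 hc k)
  have htotal : ∑ s, (picks c F).count (.inl s) = #F := by
    rw [← card_picks (c := c), ← Multiset.sum_count_eq_card (s := univ) fun _ _ => mem_univ _,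
      Fintype.sum_sum_type, sum_eq_zero fun j _ => hinr j, add_zero]
  have hle : ∑ s, (picks c F).count (.inl s) ≤ ∑ s, (b s - 1) := sum_le_sum fun s _ => by
    have h1 := Multiset.count_le_of_le (.inl s) (picks_mono (c := c) (subset_univ F))
    have h2 : (picks c univ).count (.inl s) < b s := hlive s
    omega
  omega

theorem exists_count_lt_lcm (hp : ∀ j, 0 < p j) {i : Fin n} (hi : ∀ k ∈ F, .inr i ∈ W k)
    {c : ι → B ⊕ Fin n} (hc : c ∈ Fintype.piFinset W) :
    ∃ c' ∈ Fintype.piFinset W, exponents p (picks c' univ) = exponents p (picks c univ) ∧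
      ∀ j ≠ i, (picks c' F).count (.inr j) < Nat.lcm (p j) (p i) := by
  set E := {c' ∈ Fintype.piFinset W | exponents p (picks c' univ) = exponents p (picks c univ)}
  obtain ⟨c', hc'E, hmax⟩ := exists_max_image E (fun c' => (picks c' F).count (.inr i))
    ⟨c, mem_filter.2 ⟨hc, rfl⟩⟩
  obtain ⟨hc'W, hc'e⟩ := mem_filter.1 hc'E
  refine ⟨c', hc'W, hc'e, fun j hji => ?_⟩
  by_contra! hle
  rw [count_picks] at hle
  obtain ⟨T, hT, hTcard⟩ := exists_subset_card_eq hle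
  have hTF : T ⊆ F := hT.trans (filter_subset _ _)
  have hTj : ∀ k ∈ T, c' k = .inr j := fun k hk => (mem_filter.1 (hT hk)).2
  set c'' := T.piecewise (fun _ => .inr i) c'
  -- trading `lcm (p j) (p i)` picks of `inr j` for as many picks of `inr i` keeps the exponents
  have hc''E : c'' ∈ E := by
    refine mem_filter.2 ⟨?_, ?_⟩
    · rw [Fintype.mem_piFinset] at hc'W ⊢
      intro k
      by_cases hk : k ∈ T
      · simpa [c'', hk] using hi k (hTF hk)
      · simpa [c'', hk] using hc'W k
    · rw [← hc'e, ← exponents_add_replicate (m := picks c'' univ) (Nat.dvd_lcm_left (p j) (p i)),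
        ← hTcard, picks_piecewise_const_add (subset_univ T) hTj, hTcard,
        exponents_add_replicate (Nat.dvd_lcm_right (p j) (p i))]
  have hcount : (picks c'' F).count (.inr i) = (picks c' F).count (.inr i) + #T := by
    simpa [Multiset.count_replicate, hji] using
      congrArg (Multiset.count (.inr i)) (picks_piecewise_const_add (b := .inr i) hTF hTj)
  have := hmax c'' hc''E
  have := Nat.lcm_pos (hp j) (hp i)
  omega

theorem exists_normalForm_sdiff_eq (hp : ∀ j, 0 < p j) (hW : ∀ k, (W k).Nonempty) {i : Fin n}
    (hi : ∀ k ∈ F, .inr i ∈ W k) (hlt : ∀ k ∈ F, ∀ j < i, .inr j ∉ W k)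
    (hcard : ∑ s, (b s - 1) + ∑ j ∈ Ici i, (Nat.lcm (p j) (p i) - 1) < #F) :
    ∃ D : Finset ι, #D = p i ∧ normalForm b p W (univ \ D) = normalForm b p W univ := by
  obtain ⟨D, hDF, hDcard, hD⟩ :=
    exists_subset_forall_rearrangement hW hi (sum_anchorCap_add_le hp hcard)
  refine ⟨D, hDcard, ?_⟩
  have hdel (c : ι → B ⊕ Fin n) (hc : ∀ k ∈ D, c k = .inr i) :
      exponents p (picks c (univ \ D)) = exponents p (picks c univ) := by
    rw [← picks_sdiff_add (subset_univ D), picks_eq_replicate hc, hDcard,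
      exponents_add_replicate dvd_rfl]
  ext μ
  simp only [normalForm, mem_filter, mem_image]
  constructor
  · rintro ⟨⟨c, hc, rfl⟩, hlive⟩
    refine ⟨⟨D.piecewise (fun _ => .inr i) c, ?_, ?_⟩, hlive⟩
    · rw [Fintype.mem_piFinset] at hc ⊢
      intro k
      by_cases hk : k ∈ D
      · simpa [hk] using hi k (hDF hk)
      · simpa [hk] using hc k
    · rw [← hdel _ fun k hk => D.piecewise_eq_of_mem _ _ hk]
      exact congrArg _ (picks_congr fun k hk => D.piecewise_eq_of_notMem _ _ (mem_sdiff.1 hk).2)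
  · rintro ⟨⟨c, hc, rfl⟩, hlive⟩
    obtain ⟨c₂, hc₂, he, hlcm⟩ := exists_count_lt_lcm hp hi hc
    have hlive₂ (s : B) : (picks c₂ univ).count (.inl s) < b s :=
      (congrFun (congrArg Prod.fst he) s).trans_lt (hlive s)
    obtain ⟨c₃, hc₃, hF, hoff, hDi⟩ := hD c₂ hc₂ (respectsCap_anchorCap hlt hc₂ hlive₂ hlcm)
    have hpicks : picks c₃ univ = picks c₂ univ := by
      rw [← picks_sdiff_add (subset_univ F), ← picks_sdiff_add (subset_univ F) (c := c₂), hF,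
        picks_congr fun k hk => hoff k (mem_sdiff.1 hk).2]
    exact ⟨⟨c₃, hc₃, by rw [hdel c₃ hDi, hpicks, he]⟩, hlive⟩

end Cutoff

theorem normalForm_eq_empty_or_exists_sdiff {ι B : Type*} [Fintype ι] [DecidableEq ι] [Fintype B]
    [DecidableEq B] {n : ℕ} {b : B → ℕ} {p : Fin n → ℕ} {W : ι → Finset (B ⊕ Fin n)}
    (hp : ∀ j, 0 < p j) (hW : ∀ k, (W k).Nonempty)
    (hcard : (∑ s, (b s - 1)) * (n + 1) + ∑ i, ∑ j ∈ Ici i, (Nat.lcm (p j) (p i) - 1) <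
      Fintype.card ι) :
    normalForm b p W univ = ∅ ∨
      ∃ D : Finset ι, D.Nonempty ∧ normalForm b p W (univ \ D) = normalForm b p W univ := by
  let least (k : ι) : WithTop (Fin n) := ({j | .inr j ∈ W k} : Finset (Fin n)).min
  let bound (o : WithTop (Fin n)) : ℕ :=
    ∑ s, (b s - 1) + o.elim 0 fun i => ∑ j ∈ Ici i, (Nat.lcm (p j) (p i) - 1)
  have hsum : ∑ o, bound o < ∑ o, #{k | least k = o} := by
    rw [← card_eq_sum_card_fiberwise fun k _ => mem_univ (least k), card_univ,
      show ∑ o, bound o = bound ⊤ + ∑ i : Fin n, bound i from Fintype.sum_option bound]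
    simp only [bound, WithTop.some, Option.elim, sum_add_distrib, sum_const, card_univ,
      Fintype.card_fin, smul_eq_mul]
    linarith
  obtain ⟨o, -, ho⟩ := exists_lt_of_sum_lt hsum
  induction o using WithTop.recTopCoe with
  | top =>
    refine .inl (normalForm_eq_empty_of_card_lt (fun k hk j hj => ?_) ho)
    have := Finset.min_eq_top.1 (mem_filter.1 hk).2
    exact (Finset.eq_empty_iff_forall_notMem.1 this j) (by simpa using hj)
  | coe i =>
    obtain ⟨D, hD, hNF⟩ := exists_normalForm_sdiff_eq hp hW
      (fun k hk => by simpa using mem_of_min (mem_filter.1 hk).2)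
      (fun k hk j hj hjW => notMem_of_lt_min hj (mem_filter.1 hk).2 (by simpa using hjW)) ho
    exact .inr ⟨D, card_pos.1 (hD ▸ hp i), hNF⟩

theorem sum_fin_sub_eq (n : ℕ) : ∑ i : Fin n, (n - i : ℕ) = n * (n + 1) / 2 := by
  rw [Fin.sum_univ_eq_sum_range (fun i => n - i), ← sum_range_reflect,
    sum_congr rfl fun j hj => show n - (n - 1 - j) = j + 1 by have := mem_range.1 hj; omega]
  rw [← add_zero (∑ j ∈ range n, (j + 1)), ← sum_range_succ' (fun j => j), sum_range_id,
    Nat.add_sub_cancel, mul_comm]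

theorem sum_sum_ite_lcm_eq {n : ℕ} {p : Fin n → ℕ} (hp : ∀ j, 0 < p j) :
    ∑ i, ∑ j, (if i ≤ j then Nat.lcm (p j) (p i) else 0) =
      ∑ i, ∑ j ∈ Ici i, (Nat.lcm (p j) (p i) - 1) + n * (n + 1) / 2 := by
  have hrow (i : Fin n) : ∑ j, (if i ≤ j then Nat.lcm (p j) (p i) else 0) =
      ∑ j ∈ Ici i, (Nat.lcm (p j) (p i) - 1) + (n - i) := by
    rw [← sum_filter, filter_le_eq_Ici, ← Fin.card_Ici, card_eq_sum_ones, ← sum_add_distrib]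
    exact sum_congr rfl fun j _ => (Nat.sub_add_cancel (Nat.lcm_pos (hp j) (hp i))).symm
  rw [sum_congr rfl fun i _ => hrow i, sum_add_distrib, sum_fin_sub_eq]

theorem general_cutoff_general
    {B : Type*} [Fintype B] {n : ℕ}
    (b : B → ℕ) (p : Fin n → ℕ) (hp : ∀ i, 2 ≤ p i)
    (l : List (Finset (B ⊕ Fin n))) (hne : ∀ W ∈ l, W.Nonempty)
    (hlen : (∑ s : B, (b s - 1)) * (n + 1) +
        (∑ i : Fin n, ∑ j : Fin n, if i ≤ j then Nat.lcm (p j) (p i) else 0) -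
        n * (n + 1) / 2 < l.length) :
    (∀ (R : Type) [CommSemiring R], (∀ a : R, a + a = a) →
      ∀ v : B ⊕ Fin n → R, (∀ s : B, v (Sum.inl s) ^ b s = 0) →
        (∀ i : Fin n, v (Sum.inr i) ^ p i = 1) →
        (l.map fun W => ∑ x ∈ W, v x).prod = 0) ∨
    (∃ l' : List (Finset (B ⊕ Fin n)), l'.Sublist l ∧ l' ≠ l ∧
      ∀ (R : Type) [CommSemiring R], (∀ a : R, a + a = a) →
        ∀ v : B ⊕ Fin n → R, (∀ s : B, v (Sum.inl s) ^ b s = 0) →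
          (∀ i : Fin n, v (Sum.inr i) ^ p i = 1) →
          (l'.map fun W => ∑ x ∈ W, v x).prod =
            (l.map fun W => ∑ x ∈ W, v x).prod) := by
  classical
  have hp₀ (i : Fin n) : 0 < p i := by have := hp i; omega
  have hW (k : Fin l.length) : l[k.1].Nonempty := hne _ (List.getElem_mem _)
  rw [sum_sum_ite_lcm_eq hp₀] at hlen
  obtain hNF | ⟨D, hD, hNF⟩ := normalForm_eq_empty_or_exists_sdiff (b := b) hp₀ hW
    (by rw [Fintype.card_fin]; omega)
  · refine .inl fun R _ hid v hv0 hv1 => ?_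
    rw [← Fin.prod_univ_fun_getElem, prod_sum_eq_sum_normalForm hid hv0 hv1 hW, hNF, sum_empty]
  · refine .inr ⟨sublistAt l (univ \ D), sublistAt_sublist l _, fun h => ?_,
      fun R _ hid v hv0 hv1 => ?_⟩
    · have hlt := (card_compl_lt_iff_nonempty D).2 hD
      rw [compl_eq_univ_sdiff, Fintype.card_fin, ← length_sublistAt l, h] at hlt
      exact hlt.false
    · rw [prod_map_sublistAt, ← Fin.prod_univ_fun_getElem,
        prod_sum_eq_sum_normalForm hid hv0 hv1 hW, prod_sum_eq_sum_normalForm hid hv0 hv1 hW, hNF]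

/-- general cut-off lemma: with bounded variables `B`
(axiom `s^{b s} = 0`) and periodic variables `s₁,…,s_n` (axiom `sᵢ^{p i} = 1`),
let `bnd = |B|₁·(n+1) + Σ_{1≤i≤j≤n} lcm(p j, p i) − n(n+1)/2` where
`|B|₁ = Σ_{s∈B} (b s − 1)`. Every product of linear terms over `B ∪ P` of
length exceeding `bnd` either has normal form `0` (it vanishes in every model)
or admits a strict subproduct with the same normal form (equal value in every
model). -/
theorem general_cutoff
    {B : Type*} [Fintype B] {n : ℕ}
    (b : B → ℕ) (p : Fin n → ℕ) (hb : ∀ s, 2 ≤ b s) (hp : ∀ i, 2 ≤ p i)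
    (l : List (Finset (B ⊕ Fin n))) (hne : ∀ W ∈ l, W.Nonempty)
    (hlen : (∑ s : B, (b s - 1)) * (n + 1) +
        (∑ i : Fin n, ∑ j : Fin n, if i ≤ j then Nat.lcm (p j) (p i) else 0) -
        n * (n + 1) / 2 < l.length) :
    (∀ (R : Type) [CommSemiring R], (∀ a : R, a + a = a) →
      ∀ v : B ⊕ Fin n → R, (∀ s : B, v (Sum.inl s) ^ b s = 0) →
        (∀ i : Fin n, v (Sum.inr i) ^ p i = 1) →
        (l.map fun W => ∑ x ∈ W, v x).prod = 0) ∨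
    (∃ l' : List (Finset (B ⊕ Fin n)), l'.Sublist l ∧ l' ≠ l ∧
      ∀ (R : Type) [CommSemiring R], (∀ a : R, a + a = a) →
        ∀ v : B ⊕ Fin n → R, (∀ s : B, v (Sum.inl s) ^ b s = 0) →
          (∀ i : Fin n, v (Sum.inr i) ^ p i = 1) →
          (l'.map fun W => ∑ x ∈ W, v x).prod =
            (l.map fun W => ∑ x ∈ W, v x).prod) :=
  general_cutoff_general b p hp l hne hlen
end

section
/- The number of distinct nonzero normal forms of products of linear terms over a set B of bounded variables is at most K(|B|, Σ_{s∈B}(b(s)−1)), where K(a,b) = Σ_{i=0}^b (2^a−1)^i. -/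
/-- Normal form of a product of linear terms over bounded variables `B` only
(axiom `s^{b s} = 0`), given as a list of factors: the set of reduced monomials
obtained by choosing one variable per factor, all counts staying strictly below
the bounds. -/
def NfB {B : Type*} [DecidableEq B] (b : B → ℕ) (l : List (Finset B)) :
    Set (B →₀ ℕ) :=
  {m | ∃ c : List B, List.Forall₂ (· ∈ ·) c l ∧ ∀ s, c.count s < b s ∧ m s = c.count s}

/-- The set of nonzero normal forms of products of linear terms over `B`. -/
def NonzeroNfs {B : Type*} [DecidableEq B] (b : B → ℕ) : Set (Set (B →₀ ℕ)) :=
  {S | ∃ l : List (Finset B), (∀ W ∈ l, W.Nonempty) ∧ S = NfB b l ∧ S ≠ ∅}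

/-!
A nonzero normal form `NfB b l` contains a monomial choosing one variable per factor, in which
every variable `s` occurs fewer than `b s` times; so `l` has at most `∑ s, (b s - 1)` factors.
Every nonzero normal form is therefore the normal form of a product of at most that many
nonempty linear terms, and there are `(2 ^ |B| - 1) ^ i` products of length `i`.
-/

lemma Set.ncard_le_card_of_subset_range {α ι : Type*} [Finite ι] {s : Set α} {f : ι → α}
    (h : s ⊆ Set.range f) : s.ncard ≤ Nat.card ι :=
  (Set.ncard_le_ncard h (Set.finite_range f)).trans <|
    (Nat.card_coe_set_eq _).symm.trans_le (Finite.card_range_le f)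

lemma Fintype.card_subtype_finset_nonempty (α : Type*) [Fintype α] :
    Fintype.card {s : Finset α // s.Nonempty} = 2 ^ Fintype.card α - 1 := by
  classical
  simp only [Finset.nonempty_iff_ne_empty, Fintype.card_subtype_compl, Fintype.card_finset,
    Fintype.card_subtype_eq]

namespace List

variable {α : Type*} [Fintype α] [DecidableEq α]

lemma length_eq_sum_count (l : List α) : l.length = ∑ a : α, l.count a := by
  simpa using (Multiset.sum_count_eq_card (s := Finset.univ) (m := (l : Multiset α))
    (fun a _ => Finset.mem_univ a)).symm

lemma length_le_sum_pred_of_count_lt {b : α → ℕ} {l : List α} (h : ∀ a, l.count a < b a) :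
    l.length ≤ ∑ a : α, (b a - 1) := by
  rw [length_eq_sum_count]
  exact Finset.sum_le_sum fun a _ => Nat.le_sub_one_of_lt (h a)

end List

section NormalForms

variable {B : Type*} [Fintype B] [DecidableEq B]

lemma length_le_of_nfB_nonempty (b : B → ℕ) {l : List (Finset B)} (h : (NfB b l).Nonempty) :
    l.length ≤ ∑ s : B, (b s - 1) := by
  obtain ⟨_, c, hc, hcount⟩ := h
  rw [← hc.length_eq]
  exact List.length_le_sum_pred_of_count_lt fun s => (hcount s).1

lemma nonzeroNfs_subset_range (b : B → ℕ) :
    NonzeroNfs b ⊆ Set.range fun p : Σ i : Fin (∑ s : B, (b s - 1) + 1),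
        Fin i → {W : Finset B // W.Nonempty} => NfB b (List.ofFn fun j => (p.2 j : Finset B)) := by
  rintro _ ⟨l, hl, rfl, hS⟩
  have hlen := length_le_of_nfB_nonempty b (Set.nonempty_iff_ne_empty.2 hS)
  refine ⟨⟨⟨l.length, Nat.lt_succ_of_le hlen⟩, fun j => ⟨l[j], hl _ (l.getElem_mem _)⟩⟩, ?_⟩
  exact congrArg (NfB b) List.ofFn_getElem

end NormalForms

theorem count_nonzero_normal_forms_bounded_general
    {B : Type*} [Fintype B] [DecidableEq B] (b : B → ℕ) :
    (NonzeroNfs b).Finite ∧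
      (NonzeroNfs b).ncard ≤
        ∑ i ∈ Finset.range ((∑ s : B, (b s - 1)) + 1),
          (2 ^ Fintype.card B - 1) ^ i := by
  have hsub := nonzeroNfs_subset_range b
  refine ⟨(Set.finite_range _).subset hsub, ?_⟩
  calc (NonzeroNfs b).ncard
      ≤ Nat.card (Σ i : Fin (∑ s : B, (b s - 1) + 1), Fin i → {W : Finset B // W.Nonempty}) :=
        Set.ncard_le_card_of_subset_range hsub
    _ = _ := by
        rw [Nat.card_eq_fintype_card, Fintype.card_sigma]
        simp only [Fintype.card_fun, Fintype.card_fin, Fintype.card_subtype_finset_nonempty]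
        exact Fin.sum_univ_eq_sum_range (fun i => (2 ^ Fintype.card B - 1) ^ i) _

/-- the number of distinct nonzero normal forms of products of
linear terms over bounded variables `B` is at most
`K(|B|, Σ_{s∈B}(b s − 1))` where `K(a,b) = Σ_{i=0}^b (2^a − 1)^i`. -/
theorem count_nonzero_normal_forms_bounded
    {B : Type*} [Fintype B] [DecidableEq B] (b : B → ℕ) (hb : ∀ s, 2 ≤ b s) :
    (NonzeroNfs b).Finite ∧
      (NonzeroNfs b).ncard ≤
        ∑ i ∈ Finset.range ((∑ s : B, (b s - 1)) + 1),
          (2 ^ Fintype.card B - 1) ^ i :=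
  count_nonzero_normal_forms_bounded_general b
end
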